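/- arXiv:2310.10983 — 7 statements merged into one kernel-verified Lean document; each statement's English description precedes it below -/
import Mathlib

section
/- Let μ be the Binomial(n, 1/2) distribution and ν the Binomial(n+1, 1/2) distribution. Then the total variation distance satisfies ‖μ − ν‖_TV = (1/2) · Σ_{k=0}^{n+1} |(n − 2k + 1)/(n + 1)| · ν(k), and consequently ‖μ − ν‖_TV = O(n^{−1/2}); more precisely there is a universal constant C such that ‖μ − ν‖_TV ≤ C n^{−1/2} for all n ≥ 1. -/
open Finset

lemma sum_k_choose (m : ℕ) :
    ∑ k ∈ range (m + 2), k * (m + 1).choose k = (m + 1) * 2 ^ m := by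
  rw [Finset.sum_range_succ']
  simp only [Nat.zero_mul, add_zero]
  have key : ∀ j, (j + 1) * (m + 1).choose (j + 1) = (m + 1) * m.choose j := by
    intro j
    rw [mul_comm, ← Nat.add_one_mul_choose_eq]
  calc ∑ j ∈ range (m + 1), (j + 1) * (m + 1).choose (j + 1)
      = ∑ j ∈ range (m + 1), (m + 1) * m.choose j :=
        Finset.sum_congr rfl fun j _ => key j
    _ = (m + 1) * 2 ^ m := by rw [← Finset.mul_sum, Nat.sum_range_choose]

lemma sum_kk_choose (m : ℕ) :
    ∑ k ∈ range (m + 3), k * (k - 1) * (m + 2).choose k = (m + 2) * (m + 1) * 2 ^ m := by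
  rw [Finset.sum_range_succ', Finset.sum_range_succ']
  simp only [Nat.zero_mul, Nat.mul_zero, add_zero, Nat.sub_self, Nat.mul_one]
  have key : ∀ j, (j + 2) * (j + 2 - 1) * (m + 2).choose (j + 2)
      = (m + 2) * ((m + 1) * m.choose j) := by
    intro j
    have h1 : (j + 2) * (m + 2).choose (j + 2) = (m + 2) * (m + 1).choose (j + 1) := by
      rw [mul_comm, ← Nat.add_one_mul_choose_eq]
    have h2 : (j + 1) * (m + 1).choose (j + 1) = (m + 1) * m.choose j := by
      rw [mul_comm, ← Nat.add_one_mul_choose_eq]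
    calc (j + 2) * (j + 2 - 1) * (m + 2).choose (j + 2)
        = (j + 1) * ((j + 2) * (m + 2).choose (j + 2)) := by
          rw [Nat.succ_sub_one]; ring
      _ = (j + 1) * ((m + 2) * (m + 1).choose (j + 1)) := by rw [h1]
      _ = (m + 2) * ((j + 1) * (m + 1).choose (j + 1)) := by ring
      _ = (m + 2) * ((m + 1) * m.choose j) := by rw [h2]
  calc ∑ j ∈ range (m + 1), (j + 1 + 1) * (j + 1) * (m + 2).choose (j + 1 + 1)
      = ∑ j ∈ range (m + 1), (m + 2) * ((m + 1) * m.choose j) := by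
        refine Finset.sum_congr rfl fun j _ => ?_
        simpa using key j
    _ = (m + 2) * (m + 1) * 2 ^ m := by
        rw [← Finset.mul_sum, ← Finset.mul_sum, Nat.sum_range_choose]; ring

lemma sum_choose_real (m : ℕ) :
    ∑ k ∈ range (m + 1), ((m.choose k : ℝ)) = 2 ^ m := by
  rw [← Nat.cast_sum]
  exact_mod_cast congrArg (Nat.cast (R := ℝ)) (Nat.sum_range_choose m)

lemma variance_sum (p : ℕ) :
    ∑ k ∈ range (p + 3), (((p:ℝ) + 2) - 2 * k) ^ 2 * ((p + 2).choose k : ℝ)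
      = ((p : ℝ) + 2) * 2 ^ (p + 2) := by
  have hA : ∑ k ∈ range (p + 3), ((p + 2).choose k : ℝ) = 2 ^ (p + 2) := by
    exact_mod_cast sum_choose_real (p + 2)
  have hB : ∑ k ∈ range (p + 3), (k : ℝ) * ((p + 2).choose k : ℝ)
      = ((p : ℝ) + 2) * 2 ^ (p + 1) := by
    have h := congrArg (Nat.cast (R := ℝ)) (sum_k_choose (p + 1))
    push_cast at h
    convert h using 2 <;> ring_nf
  have hD : ∑ k ∈ range (p + 3), (k : ℝ) * ((k:ℝ) - 1) * ((p + 2).choose k : ℝ)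
      = ((p : ℝ) + 2) * ((p : ℝ) + 1) * 2 ^ p := by
    have h := congrArg (Nat.cast (R := ℝ)) (sum_kk_choose p)
    push_cast at h
    rw [← h]
    refine Finset.sum_congr rfl fun k _ => ?_
    rcases k with _ | k
    · simp
    · push_cast [Nat.succ_sub_one]
      ring
  have expand : ∀ k : ℕ, (((p:ℝ) + 2) - 2 * k) ^ 2 * ((p + 2).choose k : ℝ)
      = ((p:ℝ)+2)^2 * ((p + 2).choose k : ℝ)
        + (-4*((p:ℝ)+2) + 4) * ((k:ℝ) * ((p + 2).choose k : ℝ))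
        + 4 * ((k:ℝ) * ((k:ℝ) - 1) * ((p + 2).choose k : ℝ)) := by
    intro k; ring
  rw [Finset.sum_congr rfl fun k _ => expand k]
  rw [Finset.sum_add_distrib, Finset.sum_add_distrib,
    ← Finset.mul_sum, ← Finset.mul_sum, ← Finset.mul_sum, hA, hB, hD]
  ring

lemma density_eq (n k : ℕ) (hk : k ≤ n + 1) :
    (n.choose k : ℝ) / 2 ^ n - ((n + 1).choose k : ℝ) / 2 ^ (n + 1)
      = ((n : ℝ) - 2 * k + 1) / ((n : ℝ) + 1) * (((n + 1).choose k : ℝ) / 2 ^ (n + 1)) := by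
  have h := Nat.choose_mul_succ_eq n k
  have h' : (n.choose k : ℝ) * ((n : ℝ) + 1)
      = ((n + 1).choose k : ℝ) * ((n : ℝ) + 1 - k) := by
    have hc := congrArg (Nat.cast (R := ℝ)) h
    push_cast [Nat.cast_sub hk] at hc
    linarith [hc]
  have h1 : ((n : ℝ) + 1) ≠ 0 := by positivity
  have h2 : ((2 : ℝ)) ^ (n + 1) ≠ 0 := by positivity
  have h3 : ((2 : ℝ)) ^ n ≠ 0 := by positivity
  field_simp
  linear_combination (2 * (2 : ℝ) ^ n) * h'

/-- Total variation distance between `Binomial(n, 1/2)` and `Binomial(n+1, 1/2)`: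
the identity `‖μ − ν‖_TV = (1/2)·Σ_{k=0}^{n+1} |(n − 2k + 1)/(n + 1)|·ν(k)` and the
bound `‖μ − ν‖_TV ≤ C·n^{−1/2}` for a universal constant `C`. -/
theorem binomial_consecutive_tv :
    ∃ C : ℝ, 0 < C ∧ ∀ n : ℕ, 1 ≤ n →
      ((1 : ℝ) / 2 * ∑ k ∈ range (n + 2),
          |(n.choose k : ℝ) / 2 ^ n - ((n + 1).choose k : ℝ) / 2 ^ (n + 1)|
        = 1 / 2 * ∑ k ∈ range (n + 2),
            |((n : ℝ) - 2 * k + 1) / ((n : ℝ) + 1)| *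
              (((n + 1).choose k : ℝ) / 2 ^ (n + 1)))
      ∧ (1 : ℝ) / 2 * ∑ k ∈ range (n + 2),
          |(n.choose k : ℝ) / 2 ^ n - ((n + 1).choose k : ℝ) / 2 ^ (n + 1)|
        ≤ C / Real.sqrt n := by
  refine ⟨1, one_pos, fun n hn => ?_⟩
  set ν : ℕ → ℝ := fun k => ((n + 1).choose k : ℝ) / 2 ^ (n + 1) with hν
  have hνnn : ∀ k, 0 ≤ ν k := fun k => by positivity
  have heq : (1 : ℝ) / 2 * ∑ k ∈ range (n + 2),
          |(n.choose k : ℝ) / 2 ^ n - ((n + 1).choose k : ℝ) / 2 ^ (n + 1)|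
        = 1 / 2 * ∑ k ∈ range (n + 2),
            |((n : ℝ) - 2 * k + 1) / ((n : ℝ) + 1)| *
              (((n + 1).choose k : ℝ) / 2 ^ (n + 1)) := by
    congr 1
    refine Finset.sum_congr rfl fun k hk => ?_
    rw [density_eq n k (by have := Finset.mem_range.mp hk; omega),
      abs_mul, abs_of_nonneg (hνnn k)]
  refine ⟨heq, ?_⟩
  rw [heq]
  have hsum1 : ∑ k ∈ range (n + 2), ν k = 1 := by
    simp only [hν]
    rw [← Finset.sum_div, show n + 2 = (n + 1) + 1 from rfl, sum_choose_real (n + 1)]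
    field_simp
  obtain ⟨p, rfl⟩ : ∃ p, n = p + 1 := ⟨n - 1, (Nat.succ_pred_eq_of_pos hn).symm⟩
  have hvar : ∑ k ∈ range (p + 3), (((p : ℝ) + 2) - 2 * k) ^ 2 * ν k = (p : ℝ) + 2 := by
    have h := variance_sum p
    simp only [hν]
    rw [show ∑ k ∈ range (p + 3), (((p:ℝ) + 2) - 2 * k) ^ 2
          * (((p + 1 + 1).choose k : ℝ) / 2 ^ (p + 1 + 1))
        = (∑ k ∈ range (p + 3), (((p:ℝ) + 2) - 2 * k) ^ 2 * ((p + 2).choose k : ℝ))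
          / 2 ^ (p + 2) from by
      rw [Finset.sum_div]
      exact Finset.sum_congr rfl fun k _ => by
        rw [show p + 1 + 1 = p + 2 from rfl]; ring]
    rw [h]
    field_simp
  have hcs : (∑ k ∈ range (p + 3), |((p : ℝ) + 2) - 2 * k| * ν k) ^ 2
      ≤ ((p : ℝ) + 2) := by
    have hCS := Finset.sum_sq_le_sum_mul_sum_of_sq_eq_mul (range (p + 3))
      (r := fun k => |((p : ℝ) + 2) - 2 * k| * ν k)
      (f := fun k => (((p : ℝ) + 2) - 2 * k) ^ 2 * ν k)
      (g := fun k => ν k)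
      (fun k _ => by positivity) (fun k _ => hνnn k)
      (fun k _ => by rw [mul_pow, sq_abs]; ring)
    rw [hvar] at hCS
    rw [show (p:ℕ) + 1 + 2 = p + 3 from rfl] at hsum1
    rw [hsum1, mul_one] at hCS
    exact hCS
  set S : ℝ := ∑ k ∈ range (p + 3), |((p : ℝ) + 2) - 2 * k| * ν k with hSdef
  have hSnn : 0 ≤ S :=
    Finset.sum_nonneg fun k _ => mul_nonneg (abs_nonneg _) (hνnn k)
  have hS : S ≤ Real.sqrt ((p : ℝ) + 2) := by
    calc S = Real.sqrt (S ^ 2) := (Real.sqrt_sq hSnn).symm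
      _ ≤ Real.sqrt ((p : ℝ) + 2) := Real.sqrt_le_sqrt hcs
  have hrw : (1:ℝ) / 2 * ∑ k ∈ range (p + 1 + 2),
        |(((p + 1 : ℕ) : ℝ) - 2 * k + 1) / (((p + 1 : ℕ) : ℝ) + 1)| *
          (((p + 1 + 1).choose k : ℝ) / 2 ^ (p + 1 + 1))
      = (1 / (2 * ((p : ℝ) + 2))) * S := by
    rw [hSdef, Finset.mul_sum, Finset.mul_sum]
    refine Finset.sum_congr rfl fun k _ => ?_
    simp only [hν]
    push_cast
    rw [abs_div, abs_of_pos (show (0:ℝ) < (p:ℝ) + 1 + 1 by positivity),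
      show ((p : ℝ) + 1 - 2 * k + 1) = ((p : ℝ) + 2) - 2 * k by ring]
    field_simp
    ring_nf
  rw [hrw]
  have hsq : Real.sqrt ((p : ℝ) + 2) ^ 2 = (p : ℝ) + 2 :=
    Real.sq_sqrt (by positivity)
  have hsq1 : Real.sqrt ((p : ℝ) + 1) ^ 2 = (p : ℝ) + 1 :=
    Real.sq_sqrt (by positivity)
  have hmono : Real.sqrt ((p : ℝ) + 1) ≤ Real.sqrt ((p : ℝ) + 2) :=
    Real.sqrt_le_sqrt (by linarith)
  have hpos1 : 0 < Real.sqrt ((p : ℝ) + 1) := Real.sqrt_pos.mpr (by positivity)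
  have hpos2 : 0 < Real.sqrt ((p : ℝ) + 2) := Real.sqrt_pos.mpr (by positivity)
  have hfinal : Real.sqrt ((p : ℝ) + 2) / (2 * ((p : ℝ) + 2))
      ≤ 1 / Real.sqrt ((p : ℝ) + 1) := by
    rw [div_le_div_iff₀ (by positivity) hpos1]
    nlinarith [hsq, hsq1, hmono, hpos1, hpos2]
  have hcast : ((p + 1 : ℕ) : ℝ) = (p : ℝ) + 1 := by push_cast; ring
  rw [hcast]
  calc (1 / (2 * ((p : ℝ) + 2))) * S
      ≤ (1 / (2 * ((p : ℝ) + 2))) * Real.sqrt ((p : ℝ) + 2) := by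
        apply mul_le_mul_of_nonneg_left hS (by positivity)
    _ = Real.sqrt ((p : ℝ) + 2) / (2 * ((p : ℝ) + 2)) := by ring
    _ ≤ 1 / Real.sqrt ((p : ℝ) + 1) := hfinal
end

section
/- Let G be an infinite, connected, locally finite vertex-transitive graph with growth function Gr. Then Gr(3nm) ≥ n · Gr(m) for all positive integers n and m. -/
/-!
Put `x i` at distance `3 m i` from `o` for `i < n`: such a vertex is the one at position `3 m i`
on a geodesic from `o` to a vertex farther away, which exists because balls are finite while `V`
is infinite. By the triangle inequality the `m`-balls around the `x i` are pairwise disjoint (as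
`3 m > 2 m`) and lie in the `3 n m`-ball around `o`; by transitivity each of them has `Gr(m)`
vertices.
-/

namespace SimpleGraph

variable {V W : Type*} {G : SimpleGraph V} {G' : SimpleGraph W}

theorem Hom.edist_map_le (f : G →g G') (u v : V) : G'.edist (f u) (f v) ≤ G.edist u v :=
  le_sInf <| by
    rintro _ ⟨p, rfl⟩
    simpa using edist_le (p.map f)

theorem Iso.edist_map (φ : G ≃g G') (u v : V) : G'.edist (φ u) (φ v) = G.edist u v :=
  le_antisymm (φ.toHom.edist_map_le u v) (by simpa using φ.symm.toHom.edist_map_le (φ u) (φ v))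

theorem Iso.dist_map (φ : G ≃g G') (u v : V) : G'.dist (φ u) (φ v) = G.dist u v := by
  rw [dist, dist, φ.edist_map]

theorem Iso.ncard_setOf_dist_le (φ : G ≃g G') (o : V) (r : ℕ) :
    {w | G'.dist (φ o) w ≤ r}.ncard = {v | G.dist o v ≤ r}.ncard := by
  have : {v | G.dist o v ≤ r} = φ ⁻¹' {w | G'.dist (φ o) w ≤ r} := by
    ext v
    simp [φ.dist_map]
  rw [this, Set.ncard_preimage_of_injective_subset_range φ.injective
    (by simp [φ.surjective.range_eq])]

theorem Preconnected.finite_setOf_dist_le (hG : G.Preconnected)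
    (hlf : ∀ v, (G.neighborSet v).Finite) (o : V) (r : ℕ) : {v | G.dist o v ≤ r}.Finite := by
  induction r with
  | zero => simp [(hG o _).dist_eq_zero_iff]
  | succ r ih =>
    refine ((ih.biUnion fun u _ ↦ hlf u).insert o).subset fun v hv ↦ ?_
    obtain ⟨q, hq⟩ := (hG v o).exists_walk_length_eq_dist
    cases q with
    | nil => exact Set.mem_insert _ _
    | @cons _ w _ hvw q =>
      refine Set.mem_insert_of_mem _ (Set.mem_biUnion (x := w) ?_ hvw.symm)
      have := dist_le q
      simp only [Walk.length_cons, dist_comm (u := v), Set.mem_ofPred_eq] at hq hv ⊢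
      rw [dist_comm]
      omega

theorem Preconnected.exists_dist_eq [Infinite V] (hG : G.Preconnected)
    (hlf : ∀ v, (G.neighborSet v).Finite) (o : V) (d : ℕ) : ∃ x, G.dist o x = d := by
  obtain ⟨w, hw⟩ : ∃ w, d < G.dist o w := by
    by_contra! h
    exact Set.infinite_univ ((hG.finite_setOf_dist_le hlf o d).subset fun v _ ↦ h v)
  obtain ⟨p, hp⟩ := (hG o w).exists_walk_length_eq_dist
  refine ⟨p.getVert d, ?_⟩
  rw [← length_eq_dist_of_subwalk hp (p.isSubwalk_take d), Walk.take_length]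
  omega

theorem Connected.disjoint_setOf_dist_le (hG : G.Connected) {x y : V} {m : ℕ}
    (h : 2 * m < G.dist x y) : Disjoint {v | G.dist x v ≤ m} {v | G.dist y v ≤ m} := by
  refine Set.disjoint_left.2 fun v hx hy ↦ ?_
  have := hG.dist_triangle (u := x) (v := v) (w := y)
  simp only [Set.mem_ofPred_eq, dist_comm (u := y)] at hx hy
  omega

theorem Connected.card_mul_ncard_setOf_dist_le {ι : Type*} [Fintype ι] (hG : G.Connected)
    (hlf : ∀ v, (G.neighborSet v).Finite) (htrans : ∀ u v, ∃ φ : G ≃g G, φ u = v)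
    {o : V} {m R : ℕ} (x : ι → V) (hsep : Pairwise fun i j ↦ 2 * m < G.dist (x i) (x j))
    (hR : ∀ i, G.dist o (x i) + m ≤ R) :
    Fintype.card ι * {v | G.dist o v ≤ m}.ncard ≤ {v | G.dist o v ≤ R}.ncard := by
  have hball : ∀ i, {v | G.dist (x i) v ≤ m}.ncard = {v | G.dist o v ≤ m}.ncard := fun i ↦ by
    obtain ⟨φ, hφ⟩ := htrans o (x i)
    rw [← hφ, φ.ncard_setOf_dist_le]
  calc Fintype.card ι * {v | G.dist o v ≤ m}.ncard
      = ∑ᶠ i, {v | G.dist (x i) v ≤ m}.ncard := by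
        simp [hball, finsum_eq_sum_of_fintype]
    _ = (⋃ i, {v | G.dist (x i) v ≤ m}).ncard :=
        (Set.ncard_iUnion_of_finite (fun i ↦ hG.preconnected.finite_setOf_dist_le hlf _ _)
          fun i j hij ↦ hG.disjoint_setOf_dist_le (hsep hij)).symm
    _ ≤ {v | G.dist o v ≤ R}.ncard := by
        refine Set.ncard_le_ncard (Set.iUnion_subset fun i v hv ↦ ?_)
          (hG.preconnected.finite_setOf_dist_le hlf o R)
        have := hG.dist_triangle (u := o) (v := x i) (w := v)
        have := hR i
        simp only [Set.mem_ofPred_eq] at hv ⊢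
        omega

end SimpleGraph

theorem growth_lower_bound_general (V : Type) [Infinite V] (G : SimpleGraph V)
    (hconn : G.Connected) (hlf : ∀ v : V, (G.neighborSet v).Finite)
    (htrans : ∀ u v : V, ∃ φ : G ≃g G, φ u = v)
    (o : V) (n m : ℕ) (hm : 0 < m) :
    n * ({v : V | G.dist o v ≤ m}).ncard ≤ ({v : V | G.dist o v ≤ 3 * n * m}).ncard := by
  choose x hx using fun i : Fin n ↦ hconn.preconnected.exists_dist_eq hlf o (3 * m * i)
  have hsep : Pairwise fun i j ↦ 2 * m < G.dist (x i) (x j) := by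
    intro i j hij
    have hij' := hconn.dist_triangle (u := o) (v := x i) (w := x j)
    have hji' := hconn.dist_triangle (u := o) (v := x j) (w := x i)
    rw [hx, hx] at hij'
    rw [hx, hx, SimpleGraph.dist_comm] at hji'
    rcases (Fin.val_ne_of_ne hij).lt_or_gt with h | h <;> nlinarith
  have hR (i : Fin n) : G.dist o (x i) + m ≤ 3 * n * m := by
    rw [hx]
    nlinarith [i.isLt]
  simpa using hconn.card_mul_ncard_setOf_dist_le hlf htrans x hsep hR

/-- For an infinite, connected, locally finite, vertex-transitive graph,
`Gr(3nm) ≥ n · Gr(m)` for all positive integers `n, m`, where `Gr(r)` is the number of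
vertices within distance `r` of a fixed root `o`. -/
theorem growth_lower_bound (V : Type) [Infinite V] (G : SimpleGraph V)
    (hconn : G.Connected) (hlf : ∀ v : V, (G.neighborSet v).Finite)
    (htrans : ∀ u v : V, ∃ φ : G ≃g G, φ u = v)
    (o : V) (n m : ℕ) (hn : 0 < n) (hm : 0 < m) :
    n * ({v : V | G.dist o v ≤ m}).ncard ≤ ({v : V | G.dist o v ≤ 3 * n * m}).ncard :=
  growth_lower_bound_general V G hconn hlf htrans o n m hm
end

section
/- Let G₁ = (V₁, E₁) and G₂ = (V₂, E₂) be graphs and let φ : V₁ → V₂ be an (α, β)-quasi-isometry with α, β ≥ 1. Let u, v ∈ V₁ and suppose x, y ∈ V₂ satisfy d(x, φ(u)) ≤ β and d(y, φ(v)) ≤ β. Then for each path γ' from x to y in G₂ there exists a path γ from u to v in G₁ such that len(γ) ≤ 10α(len(γ') + β) and φ(B_r(γ)) ⊆ B_{αr + (5α² + 2)β}(γ') for every r ≥ 0. -/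
/-!
Cut `γ'` into segments of `b = ⌈β⌉` edges. By coarse surjectivity each cut point of `γ'` lies
within `β` of the image of a vertex of `G₁`; consecutive such vertices have images at distance at
most `4β`, so by the lower quasi-isometry bound they are at distance at most `5αβ` and can be
joined by a geodesic. Since `b ≥ β`, the concatenated geodesics have length at most
`5α(len γ' + β)`, and every vertex of them lies within `5αβ` of a vertex whose image is
`β`-close to `γ'`; the upper quasi-isometry bound then controls the image of the `r`-tube.
-/

open SimpleGraph

namespace SimpleGraph

variable {V : Type*} {G : SimpleGraph V}

lemma Connected.cast_dist_triangle (h : G.Connected) (u v w : V) :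
    (G.dist u w : ℝ) ≤ G.dist u v + G.dist v w := by
  exact_mod_cast h.dist_triangle

lemma Walk.dist_le_length_of_mem_support {u v w : V} (p : G.Walk u v) (hw : w ∈ p.support) :
    G.dist u w ≤ p.length := by
  classical
  exact (dist_le _).trans (p.length_takeUntil_le_length hw)

lemma Walk.dist_getVert_le {u v : V} (p : G.Walk u v) (n : ℕ) : G.dist u (p.getVert n) ≤ n :=
  (dist_le (p.take n)).trans (by simp)

lemma Walk.support_drop_subset {u v : V} (p : G.Walk u v) (n : ℕ) :
    (p.drop n).support ⊆ p.support :=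
  (p.isSubwalk_drop n).support_subset

lemma Connected.exists_walk_length_le_of_dist_le (h : G.Connected) {u v : V} {D : ℝ}
    (huv : (G.dist u v : ℝ) ≤ D) :
    ∃ p : G.Walk u v, (p.length : ℝ) ≤ D ∧ ∀ w ∈ p.support, (G.dist u w : ℝ) ≤ D := by
  obtain ⟨p, hp⟩ := h.exists_walk_length_eq_dist u v
  refine ⟨p, by rwa [hp], fun w hw => le_trans ?_ huv⟩
  exact_mod_cast hp ▸ p.dist_le_length_of_mem_support hw

end SimpleGraph

section QuasiIsometry

variable {V₁ V₂ : Type*} {G₁ : SimpleGraph V₁} {G₂ : SimpleGraph V₂} {φ : V₁ → V₂} {α β : ℝ}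

lemma dist_le_of_dist_image_le (hα : 0 < α)
    (hlow : ∀ a b : V₁, (G₁.dist a b : ℝ) / α - β ≤ (G₂.dist (φ a) (φ b) : ℝ))
    {a b : V₁} {c : ℝ} (hab : (G₂.dist (φ a) (φ b) : ℝ) ≤ c) :
    (G₁.dist a b : ℝ) ≤ α * (c + β) := by
  have := hlow a b
  rw [← div_le_iff₀' hα]
  linarith

lemma dist_le_of_dist_le_of_near_image (h₂ : G₂.Connected) (hα : 0 < α)
    (hlow : ∀ a b : V₁, (G₁.dist a b : ℝ) / α - β ≤ (G₂.dist (φ a) (φ b) : ℝ))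
    {x y : V₂} {u v : V₁} (hx : (G₂.dist x (φ u) : ℝ) ≤ β) (hy : (G₂.dist y (φ v) : ℝ) ≤ β)
    (hxy : (G₂.dist x y : ℝ) ≤ 2 * β) :
    (G₁.dist u v : ℝ) ≤ 5 * α * β := by
  have himage : (G₂.dist (φ u) (φ v) : ℝ) ≤ 4 * β := by
    have hux := h₂.cast_dist_triangle (φ u) x (φ v)
    have hxv := h₂.cast_dist_triangle x y (φ v)
    rw [dist_comm (u := φ u) (v := x)] at hux
    linarith
  have := dist_le_of_dist_image_le hα hlow himage
  linarith

theorem exists_walk_pullback (h₁ : G₁.Connected) (h₂ : G₂.Connected) (hα : 0 < α)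
    (hlow : ∀ a b : V₁, (G₁.dist a b : ℝ) / α - β ≤ (G₂.dist (φ a) (φ b) : ℝ))
    (hsurj : ∀ z : V₂, ∃ a : V₁, (G₂.dist z (φ a) : ℝ) ≤ β)
    {b : ℕ} (hb : 0 < b) (hβb : β ≤ b) (hb2β : (b : ℝ) ≤ 2 * β)
    {y : V₂} {v : V₁} (hy : (G₂.dist y (φ v) : ℝ) ≤ β)
    {x : V₂} {u : V₁} (γ' : G₂.Walk x y) (hx : (G₂.dist x (φ u) : ℝ) ≤ β) :
    ∃ γ : G₁.Walk u v, (γ.length : ℝ) ≤ 5 * α * ((γ'.length : ℝ) + β) ∧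
      ∀ w ∈ γ.support, ∃ a : V₁, (∃ w' ∈ γ'.support, (G₂.dist w' (φ a) : ℝ) ≤ β) ∧
        (G₁.dist a w : ℝ) ≤ 5 * α * β := by
  by_cases hshort : γ'.length ≤ b
  · have hxy : (G₂.dist x y : ℝ) ≤ 2 * β := by
      have : G₂.dist x y ≤ b := (dist_le γ').trans hshort
      exact le_trans (by exact_mod_cast this) hb2β
    obtain ⟨γ, hγ, hnear⟩ := h₁.exists_walk_length_le_of_dist_le
      (dist_le_of_dist_le_of_near_image h₂ hα hlow hx hy hxy)
    refine ⟨γ, hγ.trans ?_, fun w hw => ⟨u, ⟨x, γ'.start_mem_support, hx⟩, hnear w hw⟩⟩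
    have : (0 : ℝ) ≤ γ'.length := Nat.cast_nonneg _
    nlinarith
  · obtain ⟨u₁, hu₁⟩ := hsurj (γ'.getVert b)
    have hxq : (G₂.dist x (γ'.getVert b) : ℝ) ≤ 2 * β :=
      le_trans (by exact_mod_cast γ'.dist_getVert_le b) hb2β
    obtain ⟨σ, hσ, hnear⟩ := h₁.exists_walk_length_le_of_dist_le
      (dist_le_of_dist_le_of_near_image h₂ hα hlow hx hu₁ hxq)
    obtain ⟨τ, hτ, htube⟩ := exists_walk_pullback h₁ h₂ hα hlow hsurj hb hβb hb2β hy
      (γ'.drop b) hu₁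
    refine ⟨σ.append τ, ?_, ?_⟩
    · have hdrop : ((γ'.drop b).length : ℝ) = γ'.length - b := by
        rw [Walk.drop_length, Nat.cast_sub (by omega)]
      rw [Walk.length_append, Nat.cast_add]
      rw [hdrop] at hτ
      nlinarith
    · intro w hw
      rcases (Walk.mem_support_append_iff σ τ).mp hw with hw | hw
      · exact ⟨u, ⟨x, γ'.start_mem_support, hx⟩, hnear w hw⟩
      · obtain ⟨a, ⟨w', hw', hw'a⟩, haw⟩ := htube w hw
        exact ⟨a, ⟨w', γ'.support_drop_subset b hw', hw'a⟩, haw⟩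
termination_by γ'.length
decreasing_by simp only [Walk.drop_length]; omega

end QuasiIsometry

/-- Quasi-isometries map tubes around paths into tubes around paths: given an
`(α,β)`-quasi-isometry `φ : G₁ → G₂`, vertices `u, v` of `G₁` and `x, y` of `G₂` with
`d(x, φ(u)) ≤ β` and `d(y, φ(v)) ≤ β`, every path `γ'` from `x` to `y` in `G₂` can be
pulled back to a path `γ` from `u` to `v` in `G₁` with `len(γ) ≤ 10α(len(γ') + β)` and
`φ(B_r(γ)) ⊆ B_{αr + (5α² + 2)β}(γ')` for every `r ≥ 0`. -/
theorem quasi_isometry_tube_pullback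
    (V₁ V₂ : Type) (G₁ : SimpleGraph V₁) (G₂ : SimpleGraph V₂)
    (h₁ : G₁.Connected) (h₂ : G₂.Connected)
    (α β : ℝ) (hα : 1 ≤ α) (hβ : 1 ≤ β) (φ : V₁ → V₂)
    (hQI : ∀ a b : V₁, (G₁.dist a b : ℝ) / α - β ≤ (G₂.dist (φ a) (φ b) : ℝ) ∧
      (G₂.dist (φ a) (φ b) : ℝ) ≤ α * (G₁.dist a b : ℝ) + β)
    (hQIsurj : ∀ z : V₂, ∃ a : V₁, (G₂.dist z (φ a) : ℝ) ≤ β)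
    (u v : V₁) (x y : V₂)
    (hx : (G₂.dist x (φ u) : ℝ) ≤ β) (hy : (G₂.dist y (φ v) : ℝ) ≤ β)
    (γ' : G₂.Walk x y) :
    ∃ γ : G₁.Walk u v, (γ.length : ℝ) ≤ 10 * α * ((γ'.length : ℝ) + β) ∧
      ∀ r : ℝ, 0 ≤ r → ∀ z : V₁, (∃ w ∈ γ.support, (G₁.dist w z : ℝ) ≤ r) →
        ∃ w' ∈ γ'.support, (G₂.dist w' (φ z) : ℝ) ≤ α * r + (5 * α ^ 2 + 2) * β := by
  obtain ⟨γ, hlen, htube⟩ := exists_walk_pullback h₁ h₂ (by linarith) (fun a b => (hQI a b).1)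
    hQIsurj (Nat.ceil_pos.mpr (by linarith)) (Nat.le_ceil β)
    (by linarith [Nat.ceil_lt_add_one (by linarith : 0 ≤ β)]) hy γ' hx
  refine ⟨γ, hlen.trans ?_, ?_⟩
  · have : (0 : ℝ) ≤ γ'.length := Nat.cast_nonneg _
    nlinarith
  rintro r - z ⟨w, hw, hwz⟩
  obtain ⟨a, ⟨w', hw', hw'a⟩, haw⟩ := htube w hw
  refine ⟨w', hw', ?_⟩
  have haz : (G₁.dist a z : ℝ) ≤ 5 * α * β + r := by
    linarith [h₁.cast_dist_triangle a w z]
  calc (G₂.dist w' (φ z) : ℝ) ≤ G₂.dist w' (φ a) + G₂.dist (φ a) (φ z) :=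
        h₂.cast_dist_triangle _ _ _
    _ ≤ β + (α * (5 * α * β + r) + β) := by
        gcongr
        exact (hQI a z).2.trans (by gcongr)
    _ = α * r + (5 * α ^ 2 + 2) * β := by ring
end

section
/- Let G be a locally finite graph, fix r > 0, and let γ be a finite path in G. Define crease times τ₀ = 0 and, inductively, τ_{i+1} as the first time k > τ_i with d(γ_{τ_i}, γ_k) ≥ r (or len(γ) if no such time exists), stopping when τ reaches len(γ); let cr_r(γ) be the number of nonzero terms, and let iron_r(γ) be the concatenation of fixed geodesics between consecutive crease points. Then: (1) iron_r(γ) is a path with the same endpoints as γ; (2) len(iron_r(γ)) ≤ r · cr_r(γ); (3) B_r(iron_r(γ)) ⊆ B_{2r}(γ); and (4) B_r(γ) ⊆ B_{2r}(iron_r(γ)). -/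
/-!
Ironing replaces `γ` by a chain of geodesics between its crease points. A crease point
`γ_{τ_{i+1}}` is the first vertex at distance `≥ r` from `γ_{τ_i}`; its predecessor on `γ` is at
distance `< r`, so consecutive crease points are at distance `≤ r` and each geodesic has length
`≤ r`. Every vertex of the ironed path lies within `r` of a crease point, which lies on `γ`, and
every vertex of `γ` lies within `r` of the preceding crease point, which lies on the ironed path;
the two ball inclusions follow from the triangle inequality.
-/

namespace SimpleGraph

variable {V : Type} {G : SimpleGraph V}

namespace Walk

lemma reachable_of_mem_support {u v w : V} (p : G.Walk u v) (hw : w ∈ p.support) :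
    G.Reachable u w :=
  let ⟨q, _, _⟩ := mem_support_iff_exists_append.mp hw
  q.reachable

lemma dist_le_length_of_mem_support_s13 {u v w : V} (p : G.Walk u v) (hw : w ∈ p.support) :
    G.dist u w ≤ p.length := by
  classical
  exact (dist_le _).trans (p.length_takeUntil_le_length hw)

lemma exists_mem_support_dist_le_add {a b c z : V} {p : G.Walk a b} {q : G.Walk a c}
    {r₁ r₂ : ℕ} (hpq : ∀ w ∈ p.support, ∃ u ∈ q.support, G.dist u w ≤ r₁)
    (hz : ∃ w ∈ p.support, G.dist w z ≤ r₂) : ∃ u ∈ q.support, G.dist u z ≤ r₁ + r₂ := by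
  obtain ⟨w, hw, hwz⟩ := hz
  obtain ⟨u, hu, huw⟩ := hpq w hw
  have hreach : G.Reachable u w :=
    (q.reachable_of_mem_support hu).symm.trans (p.reachable_of_mem_support hw)
  exact ⟨u, hu, (hreach.dist_triangle_left z).trans (by omega)⟩

end Walk

noncomputable def geodesic {u v : V} (h : G.Reachable u v) : G.Walk u v :=
  h.exists_walk_length_eq_dist.choose

lemma length_geodesic {u v : V} (h : G.Reachable u v) : (geodesic h).length = G.dist u v :=
  h.exists_walk_length_eq_dist.choose_spec

section GeodesicChain

variable (v : ℕ → V) (hv : ∀ i, G.Reachable (v i) (v (i + 1)))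

noncomputable def geodesicChain : (k : ℕ) → G.Walk (v 0) (v k)
  | 0 => Walk.nil
  | k + 1 => (geodesicChain k).append (geodesic (hv k))

lemma length_geodesicChain (k : ℕ) :
    (geodesicChain v hv k).length = ∑ i ∈ Finset.range k, G.dist (v i) (v (i + 1)) := by
  induction k with
  | zero => rfl
  | succ k ih => rw [geodesicChain, Walk.length_append, ih, length_geodesic, Finset.sum_range_succ]

lemma mem_support_geodesicChain {i k : ℕ} (hi : i ≤ k) : v i ∈ (geodesicChain v hv k).support := by
  induction k with
  | zero => obtain rfl := Nat.le_zero.mp hi; exact Walk.start_mem_support _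
  | succ k ih =>
    rw [geodesicChain, Walk.mem_support_append_iff]
    rcases Nat.of_le_succ hi with hi | rfl
    · exact .inl (ih hi)
    · exact .inr (Walk.end_mem_support _)

lemma exists_dist_le_of_mem_support_geodesicChain {r k : ℕ}
    (hr : ∀ i < k, G.dist (v i) (v (i + 1)) ≤ r) {w : V}
    (hw : w ∈ (geodesicChain v hv k).support) : ∃ i ≤ k, G.dist (v i) w ≤ r := by
  induction k with
  | zero =>
    obtain rfl : w = v 0 := by simpa [geodesicChain] using hw
    exact ⟨0, le_rfl, by simp⟩
  | succ k ih =>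
    rw [geodesicChain, Walk.mem_support_append_iff] at hw
    rcases hw with hw | hw
    · obtain ⟨i, hi, hd⟩ := ih (fun i hi' => hr i (by omega)) hw
      exact ⟨i, by omega, hd⟩
    · refine ⟨k, by omega, ?_⟩
      calc G.dist (v k) w ≤ (geodesic (hv k)).length := Walk.dist_le_length_of_mem_support_s13 _ hw
        _ = G.dist (v k) (v (k + 1)) := length_geodesic _
        _ ≤ r := hr k k.lt_succ_self

end GeodesicChain

namespace Walk

variable {a b : V} (γ : G.Walk a b) (r : ℕ)

open Classical in
noncomputable def nextCrease (t : ℕ) : ℕ :=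
  if h : ∃ j, t < j ∧ j ≤ γ.length ∧ r ≤ G.dist (γ.getVert t) (γ.getVert j) then Nat.find h
  else γ.length

lemma nextCrease_le_length (t : ℕ) : γ.nextCrease r t ≤ γ.length := by
  unfold nextCrease
  split_ifs with h
  · exact (Nat.find_spec h).2.1
  · exact le_rfl

lemma nextCrease_length : γ.nextCrease r γ.length = γ.length := by
  unfold nextCrease
  rw [dif_neg]
  rintro ⟨j, hj, hj', -⟩
  omega

variable {γ r}

lemma lt_nextCrease {t : ℕ} (ht : t < γ.length) : t < γ.nextCrease r t := by
  unfold nextCrease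
  split_ifs with h
  · exact (Nat.find_spec h).1
  · exact ht

lemma dist_getVert_lt_of_lt_nextCrease {t j : ℕ} (htj : t < j) (hj : j < γ.nextCrease r t) :
    G.dist (γ.getVert t) (γ.getVert j) < r := by
  have hjn : j ≤ γ.length := hj.le.trans (γ.nextCrease_le_length r t)
  unfold nextCrease at hj
  split_ifs at hj with h
  · by_contra! hd
    exact Nat.find_min h hj ⟨htj, hjn, hd⟩
  · by_contra! hd
    exact h ⟨j, htj, hjn, hd⟩

variable (γ r) in
lemma nextCrease_eq_length_or_le_dist (t : ℕ) :
    γ.nextCrease r t = γ.length ∨ r ≤ G.dist (γ.getVert t) (γ.getVert (γ.nextCrease r t)) := by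
  unfold nextCrease
  split_ifs with h
  · exact .inr (Nat.find_spec h).2.2
  · exact .inl rfl

/-- The vertex just before the crease point is still within distance `< r`. -/
lemma dist_getVert_nextCrease_le (hr : 1 ≤ r) {t : ℕ} (ht : t < γ.length) :
    G.dist (γ.getVert t) (γ.getVert (γ.nextCrease r t)) ≤ r := by
  have hlt := lt_nextCrease (r := r) ht
  obtain ⟨s, hs⟩ : ∃ s, γ.nextCrease r t = s + 1 := Nat.exists_eq_add_one_of_ne_zero (by omega)
  have hts : t ≤ s := by omega
  have hadj : G.Adj (γ.getVert s) (γ.getVert (s + 1)) :=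
    γ.adj_getVert_succ (by have := γ.nextCrease_le_length r t; omega)
  have hbefore : G.dist (γ.getVert t) (γ.getVert s) < r := by
    rcases hts.eq_or_lt with rfl | hts
    · rw [dist_self]; omega
    · exact dist_getVert_lt_of_lt_nextCrease hts (by omega)
  rw [hs]
  calc G.dist (γ.getVert t) (γ.getVert (s + 1))
      ≤ G.dist (γ.getVert t) (γ.getVert s) + G.dist (γ.getVert s) (γ.getVert (s + 1)) :=
        hadj.reachable.dist_triangle_right _
    _ ≤ r := by rw [dist_eq_one_iff_adj.mpr hadj]; omega

variable (γ r)

noncomputable def creaseTime (i : ℕ) : ℕ := (γ.nextCrease r)^[i] 0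

lemma creaseTime_zero : γ.creaseTime r 0 = 0 := rfl

lemma creaseTime_succ (i : ℕ) : γ.creaseTime r (i + 1) = γ.nextCrease r (γ.creaseTime r i) :=
  Function.iterate_succ_apply' _ _ _

lemma creaseTime_le_length (i : ℕ) : γ.creaseTime r i ≤ γ.length := by
  cases i with
  | zero => exact Nat.zero_le _
  | succ i => rw [creaseTime_succ]; exact γ.nextCrease_le_length r _

lemma min_le_creaseTime (i : ℕ) : min i γ.length ≤ γ.creaseTime r i := by
  induction i with
  | zero => exact Nat.zero_le _
  | succ i ih =>
    rw [creaseTime_succ]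
    rcases (γ.creaseTime_le_length r i).eq_or_lt with h | h
    · rw [h, nextCrease_length]; omega
    · have := lt_nextCrease (r := r) h; omega

lemma exists_creaseTime_eq_length : ∃ i, γ.creaseTime r i = γ.length :=
  ⟨γ.length, le_antisymm (γ.creaseTime_le_length r _) (by simpa using γ.min_le_creaseTime r γ.length)⟩

open Classical in
noncomputable def creaseNumber : ℕ := Nat.find (γ.exists_creaseTime_eq_length r)

lemma creaseTime_creaseNumber : γ.creaseTime r (γ.creaseNumber r) = γ.length := by
  classical
  exact Nat.find_spec (γ.exists_creaseTime_eq_length r)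

variable {γ r}

lemma creaseTime_lt_length {i : ℕ} (hi : i < γ.creaseNumber r) : γ.creaseTime r i < γ.length := by
  classical
  exact (γ.creaseTime_le_length r i).lt_of_ne (Nat.find_min (γ.exists_creaseTime_eq_length r) hi)

lemma creaseTime_of_creaseNumber_le {i : ℕ} (hi : γ.creaseNumber r ≤ i) :
    γ.creaseTime r i = γ.length := by
  induction i, hi using Nat.le_induction with
  | base => exact γ.creaseTime_creaseNumber r
  | succ i _ ih => rw [creaseTime_succ, ih, nextCrease_length]

lemma exists_creaseTime_le_lt_creaseTime_succ {j : ℕ} (hj : j < γ.length) :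
    ∃ i < γ.creaseNumber r, γ.creaseTime r i ≤ j ∧ j < γ.creaseTime r (i + 1) := by
  classical
  have hex : ∃ m, j < γ.creaseTime r m := ⟨γ.creaseNumber r, by rwa [creaseTime_creaseNumber]⟩
  obtain ⟨i, hi⟩ : ∃ i, Nat.find hex = i + 1 :=
    Nat.exists_eq_add_one_of_ne_zero fun h => by
      have := Nat.find_spec hex
      rw [h, creaseTime_zero] at this
      omega
  have hle : γ.creaseTime r i ≤ j := not_lt.mp (Nat.find_min hex (by omega))
  refine ⟨i, ?_, hle, hi ▸ Nat.find_spec hex⟩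
  by_contra! hcr
  rw [creaseTime_of_creaseNumber_le hcr] at hle
  omega

lemma exists_dist_getVert_creaseTime_le {j : ℕ} (hj : j ≤ γ.length) :
    ∃ i ≤ γ.creaseNumber r, G.dist (γ.getVert (γ.creaseTime r i)) (γ.getVert j) ≤ r := by
  rcases hj.eq_or_lt with rfl | hj
  · exact ⟨γ.creaseNumber r, le_rfl, by simp [creaseTime_creaseNumber]⟩
  obtain ⟨i, hi, hle, hlt⟩ := exists_creaseTime_le_lt_creaseTime_succ (r := r) hj
  refine ⟨i, hi.le, ?_⟩
  rcases hle.eq_or_lt with heq | hle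
  · simp [heq]
  · rw [creaseTime_succ] at hlt
    exact (dist_getVert_lt_of_lt_nextCrease hle hlt).le

variable (γ r)

lemma reachable_getVert_getVert (s t : ℕ) : G.Reachable (γ.getVert s) (γ.getVert t) :=
  (γ.reachable_of_mem_support (γ.getVert_mem_support s)).symm.trans
    (γ.reachable_of_mem_support (γ.getVert_mem_support t))

noncomputable def iron : G.Walk a b :=
  (geodesicChain (fun i => γ.getVert (γ.creaseTime r i))
    (fun i => γ.reachable_getVert_getVert _ _) (γ.creaseNumber r)).copy
    (by simp [creaseTime_zero]) (by simp [creaseTime_creaseNumber])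

variable {γ r}

lemma dist_getVert_creaseTime_succ_le (hr : 1 ≤ r) {i : ℕ} (hi : i < γ.creaseNumber r) :
    G.dist (γ.getVert (γ.creaseTime r i)) (γ.getVert (γ.creaseTime r (i + 1))) ≤ r := by
  rw [creaseTime_succ]
  exact dist_getVert_nextCrease_le hr (creaseTime_lt_length hi)

lemma length_iron_le (hr : 1 ≤ r) : (γ.iron r).length ≤ r * γ.creaseNumber r := by
  rw [iron, length_copy, length_geodesicChain, mul_comm]
  simpa using Finset.sum_le_card_nsmul _ _ r fun i hi =>
    dist_getVert_creaseTime_succ_le hr (Finset.mem_range.mp hi)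

lemma getVert_creaseTime_mem_support_iron {i : ℕ} (hi : i ≤ γ.creaseNumber r) :
    γ.getVert (γ.creaseTime r i) ∈ (γ.iron r).support := by
  rw [iron, support_copy]
  exact mem_support_geodesicChain (fun i => γ.getVert (γ.creaseTime r i)) _ hi

lemma exists_dist_le_of_mem_support_iron (hr : 1 ≤ r) {w : V} (hw : w ∈ (γ.iron r).support) :
    ∃ i ≤ γ.creaseNumber r, G.dist (γ.getVert (γ.creaseTime r i)) w ≤ r := by
  rw [iron, support_copy] at hw
  exact exists_dist_le_of_mem_support_geodesicChain (fun i => γ.getVert (γ.creaseTime r i)) _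
    (fun i hi => dist_getVert_creaseTime_succ_le hr hi) hw

end Walk

end SimpleGraph

open SimpleGraph

/-- The ironing procedure: for any finite path `γ` in a graph and any scale `r ≥ 1`,
there are crease times `0 = τ₀ < τ₁ < ⋯ < τ_k = len(γ)` (each `τ_{i+1}` being the first
time after `τ_i` at which the path is at distance `≥ r` from `γ_{τ_i}`, or `len(γ)` if
there is no such time), with crease number `cr_r(γ) = k`, and an ironed path
`iron_r(γ) = ι` (a concatenation of geodesics between consecutive crease points) such
that: (1) `ι` has the same endpoints as `γ`; (2) `len(ι) ≤ r·k`;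
(3) `B_r(ι) ⊆ B_{2r}(γ)`; (4) `B_r(γ) ⊆ B_{2r}(ι)`. -/
theorem ironing (V : Type) (G : SimpleGraph V) (r : ℕ) (hr : 1 ≤ r)
    (a b : V) (γ : G.Walk a b) :
    ∃ (k : ℕ) (τ : ℕ → ℕ) (ι : G.Walk a b),
      τ 0 = 0 ∧ τ k = γ.length ∧
      (∀ i < k, τ i < τ (i + 1) ∧ τ (i + 1) ≤ γ.length ∧
        (∀ j, τ i < j → j < τ (i + 1) → G.dist (γ.getVert (τ i)) (γ.getVert j) < r) ∧
        (τ (i + 1) = γ.length ∨ r ≤ G.dist (γ.getVert (τ i)) (γ.getVert (τ (i + 1))))) ∧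
      (∀ i < k, τ i < γ.length) ∧
      ι.length ≤ r * k ∧
      (∀ z : V, (∃ w ∈ ι.support, G.dist w z ≤ r) → ∃ w ∈ γ.support, G.dist w z ≤ 2 * r) ∧
      (∀ z : V, (∃ w ∈ γ.support, G.dist w z ≤ r) → ∃ w ∈ ι.support, G.dist w z ≤ 2 * r) := by
  refine ⟨γ.creaseNumber r, γ.creaseTime r, γ.iron r, γ.creaseTime_zero r,
    γ.creaseTime_creaseNumber r, fun i hi => ?_, fun i hi => Walk.creaseTime_lt_length hi,
    Walk.length_iron_le hr, fun z hz => ?_, fun z hz => ?_⟩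
  · have ht := Walk.creaseTime_lt_length hi
    rw [Walk.creaseTime_succ]
    exact ⟨Walk.lt_nextCrease ht, γ.nextCrease_le_length r _,
      fun j h₁ h₂ => Walk.dist_getVert_lt_of_lt_nextCrease h₁ h₂,
      γ.nextCrease_eq_length_or_le_dist r _⟩
  · rw [two_mul]
    refine Walk.exists_mem_support_dist_le_add (fun w hw => ?_) hz
    obtain ⟨i, -, hd⟩ := Walk.exists_dist_le_of_mem_support_iron hr hw
    exact ⟨_, γ.getVert_mem_support _, hd⟩
  · rw [two_mul]
    refine Walk.exists_mem_support_dist_le_add (fun w hw => ?_) hz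
    obtain ⟨j, rfl, hj⟩ := Walk.mem_support_iff_exists_getVert.mp hw
    obtain ⟨i, hi, hd⟩ := Walk.exists_dist_getVert_creaseTime_le (r := r) hj
    exact ⟨_, Walk.getVert_creaseTime_mem_support_iron hi, hd⟩
end

section
/- Let Γ be a group with finite symmetric generating set S, let F_S be the free group on S with canonical surjection π : F_S → Γ and kernel R, and for r ≥ 1 let Γ_r = F_S / ⟪ S̄^r ∩ R ⟫ where S̄ = S ∪ {id} ∪ S^{−1} and ⟪A⟫ denotes the normal closure of A. Then the quotient map Γ_r → Γ induces a graph homomorphism of Cayley graphs Cay(Γ_r, S) → Cay(Γ, S) that restricts to an isomorphism between the balls of radius ⌊r/2⌋ − 1 around the identities. -/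
open SimpleGraph

/-- The (simple) Cayley graph of a group `Γ` with respect to a family of generators
`g : α → Γ`: vertices `a, b` are adjacent iff `a ≠ b` and `b = a·g i` or `a = b·g i`
for some `i`. -/
def cayleyGraph (Γ : Type*) [Group Γ] {α : Type*} (g : α → Γ) : SimpleGraph Γ :=
  SimpleGraph.fromRel (fun a b => ∃ i, b = a * g i)

/-- The normal closure of the set of relations of word length at most `r`. -/
abbrev shortRelations (α : Type*) [DecidableEq α] (Γ : Type*) [Group Γ] (f : α → Γ) (r : ℕ) :
    Subgroup (FreeGroup α) :=
  Subgroup.normalClosure {w : FreeGroup α | w.norm ≤ r ∧ FreeGroup.lift f w = 1}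

namespace BallIsoAux

variable {α : Type*} {G : Type*} [Group G]

/-- Evaluate a letter list. -/
def evl (g : α → G) (L : List (α × Bool)) : G :=
  (L.map fun x => cond x.2 (g x.1) (g x.1)⁻¹).prod

lemma evl_eq_lift (g : α → G) (L : List (α × Bool)) :
    evl g L = FreeGroup.lift g (FreeGroup.mk L) :=
  FreeGroup.lift_mk.symm

lemma exists_walk (g : α → G) :
    ∀ (L : List (α × Bool)) (a : G),
      ∃ p : (cayleyGraph G g).Walk a (a * evl g L), p.length ≤ L.length := by
  intro L
  induction L with
  | nil =>
      intro a
      exact ⟨SimpleGraph.Walk.nil.copy rfl (by simp [evl]), by simp⟩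
  | cons hd tl ih =>
      intro a
      obtain ⟨i, b⟩ := hd
      set s : G := cond b (g i) (g i)⁻¹ with hs
      have hev : a * evl g ((i, b) :: tl) = (a * s) * evl g tl := by
        simp [evl, mul_assoc, hs]
      by_cases h : a = a * s
      · obtain ⟨p, hp⟩ := ih (a * s)
        refine ⟨(p.copy (by rw [← h]) (by rw [← hev])), ?_⟩
        simpa using hp.trans (Nat.le_succ _)
      · have hadj : (cayleyGraph G g).Adj a (a * s) := by
          refine ⟨h, ?_⟩
          cases b with
          | true => exact Or.inl ⟨i, by simp [hs]⟩
          | false => exact Or.inr ⟨i, by simp [hs, mul_assoc]⟩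
        obtain ⟨p, hp⟩ := ih (a * s)
        refine ⟨(SimpleGraph.Walk.cons hadj p).copy rfl (by rw [← hev]), ?_⟩
        simpa using Nat.succ_le_succ hp

lemma walk_to_word (g : α → G) {a b : G} (p : (cayleyGraph G g).Walk a b) :
    ∃ L : List (α × Bool), L.length = p.length ∧ a * evl g L = b := by
  induction p with
  | nil => exact ⟨[], rfl, by simp [evl]⟩
  | @cons a c b h p ih =>
      obtain ⟨L, hl, he⟩ := ih
      obtain ⟨hne, hor⟩ := h
      rcases hor with ⟨i, hc⟩ | ⟨i, ha⟩
      · refine ⟨(i, true) :: L, by simp [hl]; rfl, ?_⟩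
        calc a * evl g ((i, true) :: L) = (a * g i) * evl g L := by
              simp [evl, mul_assoc]
          _ = b := by rw [← hc, he]
      · refine ⟨(i, false) :: L, by simp [hl]; rfl, ?_⟩
        have hc : c = a * (g i)⁻¹ := by rw [ha]; group
        calc a * evl g ((i, false) :: L) = (a * (g i)⁻¹) * evl g L := by
              simp [evl, mul_assoc]
          _ = b := by rw [← hc, he]

lemma reachable [DecidableEq α] (g : α → G) (hsurj : Function.Surjective (FreeGroup.lift g)) (x : G) :
    (cayleyGraph G g).Reachable 1 x := by
  obtain ⟨w, rfl⟩ := hsurj x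
  obtain ⟨p, -⟩ := exists_walk g w.toWord 1
  have : (1 : G) * evl g w.toWord = FreeGroup.lift g w := by
    rw [one_mul, evl_eq_lift, FreeGroup.mk_toWord]
  exact ⟨p.copy rfl this⟩

lemma dist_le_iff [DecidableEq α] (g : α → G) (hsurj : Function.Surjective (FreeGroup.lift g)) (x : G) (n : ℕ) :
    (cayleyGraph G g).dist 1 x ≤ n ↔
      ∃ w : FreeGroup α, w.norm ≤ n ∧ FreeGroup.lift g w = x := by
  constructor
  · intro h
    obtain ⟨p, hp⟩ := (reachable g hsurj x).exists_walk_length_eq_dist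
    obtain ⟨L, hl, he⟩ := walk_to_word g p
    refine ⟨FreeGroup.mk L, ?_, ?_⟩
    · calc (FreeGroup.mk L).norm ≤ L.length := FreeGroup.norm_mk_le
        _ ≤ n := by omega
    · rw [← evl_eq_lift, ← he, one_mul]
  · rintro ⟨w, hn, rfl⟩
    obtain ⟨p, hp⟩ := exists_walk g w.toWord 1
    have he : (1 : G) * evl g w.toWord = FreeGroup.lift g w := by
      rw [one_mul, evl_eq_lift, FreeGroup.mk_toWord]
    have := SimpleGraph.dist_le (p.copy rfl he)
    have hnorm : w.toWord.length = w.norm := rfl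
    simp only [SimpleGraph.Walk.length_copy] at this
    omega

end BallIsoAux

/-- Killing only the relations of length at most `r` does not change the Cayley graph
within radius `⌊r/2⌋ − 1`: the canonical map `Γ_r = F_S/⟪R_r⟫ → Γ` restricts to an
isomorphism between the balls of radius `⌊r/2⌋ − 1` around the identities of the
respective Cayley graphs. -/
theorem ball_iso_of_short_relations (α : Type) [Finite α] [DecidableEq α] (Γ : Type) [Group Γ]
    (f : α → Γ) (hgen : Subgroup.closure (Set.range f) = ⊤) (r : ℕ) (hr : 1 ≤ r) :
    ∃ φ : (FreeGroup α ⧸ shortRelations α Γ f r) →* Γ,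
      (∀ w : FreeGroup α, φ (QuotientGroup.mk w) = FreeGroup.lift f w) ∧
      Set.BijOn φ
        {x | (cayleyGraph (FreeGroup α ⧸ shortRelations α Γ f r)
            (fun i => QuotientGroup.mk (FreeGroup.of i))).dist 1 x ≤ r / 2 - 1}
        {x | (cayleyGraph Γ f).dist 1 x ≤ r / 2 - 1} ∧
      ∀ x y : FreeGroup α ⧸ shortRelations α Γ f r,
        (cayleyGraph _ (fun i => (QuotientGroup.mk (FreeGroup.of i) :
            FreeGroup α ⧸ shortRelations α Γ f r))).dist 1 x ≤ r / 2 - 1 →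
        (cayleyGraph _ (fun i => (QuotientGroup.mk (FreeGroup.of i) :
            FreeGroup α ⧸ shortRelations α Γ f r))).dist 1 y ≤ r / 2 - 1 →
        ((cayleyGraph _ (fun i => (QuotientGroup.mk (FreeGroup.of i) :
            FreeGroup α ⧸ shortRelations α Γ f r))).Adj x y ↔
          (cayleyGraph Γ f).Adj (φ x) (φ y)) := by
  classical
  set k := r / 2 - 1 with hk
  set N := shortRelations α Γ f r with hN
  -- the quotient group and its generators
  set Q := FreeGroup α ⧸ N
  set g' : α → Q := fun i => QuotientGroup.mk (FreeGroup.of i) with hg'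
  -- N is contained in the kernel of lift f
  have hker : N ≤ (FreeGroup.lift f).ker := by
    apply Subgroup.normalClosure_le_normal
    intro w hw
    exact hw.2
  -- the induced map
  set φ : Q →* Γ := QuotientGroup.lift N (FreeGroup.lift f) hker with hφ
  have hφmk : ∀ w : FreeGroup α, φ (QuotientGroup.mk w) = FreeGroup.lift f w := fun w => rfl
  have hφg : ∀ i, φ (g' i) = f i := fun i =>
    (hφmk (FreeGroup.of i)).trans (FreeGroup.lift_apply_of)
  -- lift g' is "mk"
  have hliftg' : ∀ w : FreeGroup α, FreeGroup.lift g' w = QuotientGroup.mk w := by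
    intro w
    exact (FreeGroup.lift_unique (QuotientGroup.mk' N) (fun i => rfl)).symm
  -- surjectivity of the two lifts
  have hsurjΓ : Function.Surjective (FreeGroup.lift f) := by
    rw [← MonoidHom.range_eq_top, FreeGroup.range_lift_eq_closure, hgen]
  have hsurjQ : Function.Surjective (FreeGroup.lift g') := by
    intro x
    obtain ⟨w, rfl⟩ := QuotientGroup.mk'_surjective N x
    exact ⟨w, hliftg' w⟩
  -- key identification lemma
  have inj2 : ∀ u v : FreeGroup α, u.norm + v.norm ≤ r → FreeGroup.lift f u = FreeGroup.lift f v →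
      (QuotientGroup.mk u : Q) = QuotientGroup.mk v := by
    intro u v hn hf
    refine (QuotientGroup.eq (s := N)).mpr ?_
    apply Subgroup.subset_normalClosure
    constructor
    · calc (u⁻¹ * v).norm ≤ u⁻¹.norm + v.norm := FreeGroup.norm_mul_le _ _
        _ = u.norm + v.norm := by rw [FreeGroup.norm_inv_eq]
        _ ≤ r := hn
    · simp [map_mul, map_inv, hf]
  have h2k : 2 * k ≤ r := by omega
  -- ball membership via words
  have hdistQ : ∀ (x : Q) (n : ℕ), (cayleyGraph Q g').dist 1 x ≤ n ↔
      ∃ w : FreeGroup α, w.norm ≤ n ∧ (QuotientGroup.mk w : Q) = x := by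
    intro x n
    rw [BallIsoAux.dist_le_iff g' hsurjQ x n]
    exact exists_congr fun w => and_congr_right fun _ => by rw [hliftg']
  have hdistΓ := fun (y : Γ) (n : ℕ) => BallIsoAux.dist_le_iff f hsurjΓ y n
  refine ⟨φ, hφmk, ⟨?_, ?_, ?_⟩, ?_⟩
  · -- MapsTo
    intro x hx
    obtain ⟨w, hn, rfl⟩ := (hdistQ x k).mp hx
    exact (hdistΓ _ k).mpr ⟨w, hn, (hφmk w).symm⟩
  · -- InjOn
    intro x hx y hy hxy
    obtain ⟨u, hu, rfl⟩ := (hdistQ x k).mp hx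
    obtain ⟨v, hv, rfl⟩ := (hdistQ y k).mp hy
    refine inj2 u v (by omega) ?_
    rw [← hφmk u, ← hφmk v]; exact hxy
  · -- SurjOn
    intro y hy
    obtain ⟨w, hn, rfl⟩ := (hdistΓ y k).mp hy
    exact ⟨QuotientGroup.mk w, (hdistQ _ k).mpr ⟨w, hn, rfl⟩, hφmk w⟩
  · -- adjacency
    intro x y hx hy
    constructor
    · rintro ⟨hne, hor⟩
      have hfne : φ x ≠ φ y := by
        intro h
        apply hne
        obtain ⟨u, hu, rfl⟩ := (hdistQ x k).mp hx
        obtain ⟨v, hv, rfl⟩ := (hdistQ y k).mp hy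
        refine inj2 u v (by omega) ?_
        rw [← hφmk u, ← hφmk v]; exact h
      rcases hor with ⟨i, hyx⟩ | ⟨i, hxy⟩
      · exact ⟨hfne, Or.inl ⟨i, by rw [hyx, map_mul, hφg]⟩⟩
      · exact ⟨hfne, Or.inr ⟨i, by rw [hxy, map_mul, hφg]⟩⟩
    · rintro ⟨hfne, hor⟩
      have hne : x ≠ y := fun h => hfne (by rw [h])
      by_cases hr2 : 2 * k + 1 ≤ r
      · obtain ⟨u, hu, hxu⟩ := (hdistQ x k).mp hx
        obtain ⟨v, hv, hyv⟩ := (hdistQ y k).mp hy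
        rcases hor with ⟨i, hyx⟩ | ⟨i, hxy⟩
        · -- φ y = φ x * f i, show y = x * g' i
          refine ⟨hne, Or.inl ⟨i, ?_⟩⟩
          have : (QuotientGroup.mk (u * FreeGroup.of i) : Q) = QuotientGroup.mk v := by
            refine inj2 _ _ ?_ ?_
            · calc (u * FreeGroup.of i).norm + v.norm
                    ≤ (u.norm + (FreeGroup.of i).norm) + v.norm :=
                    Nat.add_le_add_right (FreeGroup.norm_mul_le _ _) _
                _ = u.norm + 1 + v.norm := by rw [FreeGroup.norm_of]
                _ ≤ r := by omega
            · rw [map_mul, FreeGroup.lift_apply_of, ← hφmk u, hxu, ← hyx, ← hφmk v, hyv]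
          rw [← hyv, ← this, ← hxu]
          rw [QuotientGroup.mk_mul]
        · refine ⟨hne, Or.inr ⟨i, ?_⟩⟩
          have : (QuotientGroup.mk (v * FreeGroup.of i) : Q) = QuotientGroup.mk u := by
            refine inj2 _ _ ?_ ?_
            · calc (v * FreeGroup.of i).norm + u.norm
                    ≤ (v.norm + (FreeGroup.of i).norm) + u.norm :=
                    Nat.add_le_add_right (FreeGroup.norm_mul_le _ _) _
                _ = v.norm + 1 + u.norm := by rw [FreeGroup.norm_of]
                _ ≤ r := by omega
            · rw [map_mul, FreeGroup.lift_apply_of, ← hφmk v, hyv, ← hxy, ← hφmk u, hxu]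
          rw [← hxu, ← this, ← hyv]
          rw [QuotientGroup.mk_mul]
      · -- r = 1, so k = 0 and both x and y are 1, contradicting hfne
        exfalso
        have hk0 : k = 0 := by omega
        have hxr : (cayleyGraph Q g').Reachable 1 x := BallIsoAux.reachable g' hsurjQ x
        have hyr : (cayleyGraph Q g').Reachable 1 y := BallIsoAux.reachable g' hsurjQ y
        have hx1 : (1 : Q) = x := hxr.dist_eq_zero_iff.mp (by omega)
        have hy1 : (1 : Q) = y := hyr.dist_eq_zero_iff.mp (by omega)
        exact hne (hx1 ▸ hy1 ▸ rfl)
end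

section
/- Let G be a finite connected graph, let 0 < p < q < 1, and let A, B be sets of vertices. Suppose θ ∈ (0,1) satisfies min_{x∈A} P_p(x ↔ B) ≥ θ and θ ≥ 2|A| · max_{x≠y∈A} P_p(x ↔ y). Then P_q(A ↔ B) ≥ 1 − exp(−δ(p,q) · θ · |A|), where δ(p,q) = log( log(1−q)/log(1−p) ). -/
attribute [local instance] Classical.propDecidable

open SimpleGraph Finset

/-- The open subgraph determined by a percolation configuration `c` on the edges of `G`. -/
def openSubgraph {V : Type*} (G : SimpleGraph V) (c : G.edgeSet → Bool) :
    SimpleGraph V where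
  Adj a b := ∃ h : G.Adj a b, c ⟨s(a, b), (G.mem_edgeSet).mpr h⟩ = true
  symm := by
    constructor
    rintro a b ⟨h, hc⟩
    refine ⟨h.symm, ?_⟩
    have he : (⟨s(b, a), (G.mem_edgeSet).mpr h.symm⟩ : G.edgeSet)
        = ⟨s(a, b), (G.mem_edgeSet).mpr h⟩ := Subtype.ext (Sym2.eq_swap)
    rw [he]; exact hc
  loopless := by constructor; rintro a ⟨h, -⟩; exact h.ne rfl

/-- The probability of an event `E` under Bernoulli(`p`) bond percolation on a finite
graph, written as an explicit sum over configurations. -/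
noncomputable def percProb {V : Type*} [Fintype V] [DecidableEq V] (G : SimpleGraph V)
    [DecidableRel G.Adj] (p : ℝ) (E : Set (G.edgeSet → Bool)) : ℝ :=
  ∑ c : G.edgeSet → Bool,
    if c ∈ E then ∏ e : G.edgeSet, (if c e then p else 1 - p) else 0

namespace Sprinkle

variable {V : Type} [Fintype V] [DecidableEq V] (G : SimpleGraph V) [DecidableRel G.Adj]

/-! ### Basic facts about `percProb` -/

/-- weight of a configuration -/
noncomputable def pw (p : ℝ) (c : G.edgeSet → Bool) : ℝ :=
  ∏ e : G.edgeSet, (if c e then p else 1 - p)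

lemma percProb_def (p : ℝ) (E : Set (G.edgeSet → Bool)) :
    percProb G p E = ∑ c : G.edgeSet → Bool, if c ∈ E then pw G p c else 0 := rfl

lemma pw_nonneg {p : ℝ} (hp0 : 0 ≤ p) (hp1 : p ≤ 1) (c : G.edgeSet → Bool) :
    0 ≤ pw G p c := by
  refine Finset.prod_nonneg fun e _ => ?_
  split <;> linarith

lemma sum_pw (p : ℝ) : ∑ c : G.edgeSet → Bool, pw G p c = 1 := by
  classical
  have h := Finset.prod_univ_sum (fun _ : G.edgeSet => (Finset.univ : Finset Bool))
      (fun _ b => if b then p else 1 - p)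
  rw [Fintype.piFinset_univ] at h
  have h2 : ∑ c : G.edgeSet → Bool, pw G p c
      = ∏ _e : G.edgeSet, ∑ b : Bool, (if b then p else 1 - p) := by
    rw [h]; rfl
  rw [h2]
  simp [Fintype.sum_bool]

lemma ite_pw_nonneg {p : ℝ} (hp0 : 0 ≤ p) (hp1 : p ≤ 1) (E : Set (G.edgeSet → Bool))
    (c : G.edgeSet → Bool) : 0 ≤ (if c ∈ E then pw G p c else 0) := by
  by_cases hc : c ∈ E
  · rw [if_pos hc]; exact pw_nonneg G hp0 hp1 c
  · rw [if_neg hc]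

lemma percProb_nonneg {p : ℝ} (hp0 : 0 ≤ p) (hp1 : p ≤ 1) (E : Set (G.edgeSet → Bool)) :
    0 ≤ percProb G p E := by
  rw [percProb_def]
  exact Finset.sum_nonneg fun c _ => ite_pw_nonneg G hp0 hp1 E c

lemma percProb_univ (p : ℝ) : percProb G p (Set.univ) = 1 := by
  rw [percProb_def]
  rw [← sum_pw G p]
  exact Finset.sum_congr rfl fun c _ => if_pos (Set.mem_univ c)

lemma percProb_mono {p : ℝ} (hp0 : 0 ≤ p) (hp1 : p ≤ 1) {E F : Set (G.edgeSet → Bool)}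
    (h : E ⊆ F) : percProb G p E ≤ percProb G p F := by
  rw [percProb_def, percProb_def]
  refine Finset.sum_le_sum fun c _ => ?_
  by_cases hc : c ∈ E
  · rw [if_pos hc, if_pos (h hc)]
  · rw [if_neg hc]
    exact ite_pw_nonneg G hp0 hp1 F c

lemma percProb_le_one {p : ℝ} (hp0 : 0 ≤ p) (hp1 : p ≤ 1) (E : Set (G.edgeSet → Bool)) :
    percProb G p E ≤ 1 := by
  rw [percProb_def, ← sum_pw G p]
  refine Finset.sum_le_sum fun c _ => ?_
  by_cases hc : c ∈ E
  · rw [if_pos hc]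
  · rw [if_neg hc]; exact pw_nonneg G hp0 hp1 c

/-- splitting an event along another event -/
lemma percProb_split (p : ℝ) (E F : Set (G.edgeSet → Bool)) :
    percProb G p E = percProb G p (E ∩ F) + percProb G p (E \ F) := by
  rw [percProb_def, percProb_def, percProb_def, ← Finset.sum_add_distrib]
  refine Finset.sum_congr rfl fun c _ => ?_
  by_cases hE : c ∈ E
  · by_cases hF : c ∈ F
    · rw [if_pos hE, if_pos (Set.mem_inter hE hF),
        if_neg (fun h : c ∈ E \ F => h.2 hF)]; ring
    · rw [if_pos hE, if_neg (fun h : c ∈ E ∩ F => hF h.2), if_pos ⟨hE, hF⟩]; ring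
  · rw [if_neg hE, if_neg (fun h : c ∈ E ∩ F => hE h.1),
      if_neg (fun h : c ∈ E \ F => hE h.1)]; ring

/-- union bound -/
lemma percProb_union_bound {p : ℝ} (hp0 : 0 ≤ p) (hp1 : p ≤ 1)
    {E U : Set (G.edgeSet → Bool)} {ι : Type} (Ys : Finset ι)
    (S : ι → Set (G.edgeSet → Bool))
    (h : ∀ c, c ∈ E → c ∉ U → ∃ y ∈ Ys, c ∈ S y) :
    percProb G p E ≤ percProb G p U + ∑ y ∈ Ys, percProb G p (S y) := by
  simp only [percProb_def]
  rw [Finset.sum_comm, ← Finset.sum_add_distrib]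
  refine Finset.sum_le_sum fun c _ => ?_
  have hsum : (0:ℝ) ≤ ∑ y ∈ Ys, if c ∈ S y then pw G p c else 0 :=
    Finset.sum_nonneg fun y _ => ite_pw_nonneg G hp0 hp1 (S y) c
  have hUn : (0:ℝ) ≤ if c ∈ U then pw G p c else 0 := ite_pw_nonneg G hp0 hp1 U c
  by_cases hE : c ∈ E
  · by_cases hU : c ∈ U
    · rw [if_pos hE, if_pos hU]
      linarith
    · obtain ⟨y0, hy0, hcy0⟩ := h c hE hU
      rw [if_pos hE, if_neg hU]
      have h1 : pw G p c ≤ ∑ y ∈ Ys, if c ∈ S y then pw G p c else 0 := by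
        have h2 := Finset.single_le_sum (f := fun y => if c ∈ S y then pw G p c else 0)
          (fun y _ => ite_pw_nonneg G hp0 hp1 (S y) c) hy0
        rwa [if_pos hcy0] at h2
      linarith
  · rw [if_neg hE]
    linarith

/-! ### The union (sprinkling) lemma -/

/-- a decreasing (downward-closed) set of configurations -/
def Decr (D : Set (G.edgeSet → Bool)) : Prop :=
  ∀ c c' : G.edgeSet → Bool, (∀ e, c e = true → c' e = true) → c' ∈ D → c ∈ D

noncomputable def ind (D : Set (G.edgeSet → Bool)) (c : G.edgeSet → Bool) : ℝ :=
  if c ∈ D then 1 else 0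

lemma percProb_as_ind (p : ℝ) (D : Set (G.edgeSet → Bool)) :
    percProb G p D = ∑ c : G.edgeSet → Bool, pw G p c * ind G D c := by
  refine Finset.sum_congr rfl fun c _ => ?_
  rw [ind]
  by_cases hc : c ∈ D
  · rw [if_pos hc, if_pos hc, mul_one]; rfl
  · rw [if_neg hc, if_neg hc, mul_zero]

lemma key_identity (p r : ℝ) (F : (G.edgeSet → Bool) → ℝ) :
    ∑ c : G.edgeSet → Bool, pw G (p + r - p*r) c * F c
      = ∑ a : G.edgeSet → Bool, ∑ b : G.edgeSet → Bool,
          pw G p a * pw G r b * F (fun e => a e || b e) := by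
  classical
  set w2 : Bool × Bool → ℝ := fun y => (if y.1 then p else 1-p) * (if y.2 then r else 1-r) with hw2
  rw [← Fintype.sum_prod_type (f := fun ab : (G.edgeSet → Bool) × (G.edgeSet → Bool) =>
      pw G p ab.1 * pw G r ab.2 * F (fun e => ab.1 e || ab.2 e))]
  have hreind := Equiv.sum_comp (Equiv.arrowProdEquivProdArrow G.edgeSet (fun _ => Bool) (fun _ => Bool))
    (fun ab : (G.edgeSet → Bool) × (G.edgeSet → Bool) =>
      pw G p ab.1 * pw G r ab.2 * F (fun e => ab.1 e || ab.2 e))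
  rw [← hreind]
  have hterm : ∀ d : G.edgeSet → Bool × Bool,
      pw G p (fun e => (d e).1) * pw G r (fun e => (d e).2) * F (fun e => (d e).1 || (d e).2)
        = (∏ e : G.edgeSet, w2 (d e)) * F (fun e => (d e).1 || (d e).2) := by
    intro d
    rw [pw, pw, ← Finset.prod_mul_distrib]
  have hEq : ∀ d : G.edgeSet → Bool × Bool,
      (Equiv.arrowProdEquivProdArrow G.edgeSet (fun _ => Bool) (fun _ => Bool)) d
        = (fun e => (d e).1, fun e => (d e).2) := fun d => rfl
  simp only [hEq]
  simp only [hterm]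
  have hfib := Finset.sum_fiberwise_of_maps_to
    (s := (Finset.univ : Finset (G.edgeSet → Bool × Bool)))
    (t := (Finset.univ : Finset (G.edgeSet → Bool)))
    (g := fun d => (fun e => (d e).1 || (d e).2))
    (fun d _ => Finset.mem_univ _)
    (fun d => (∏ e : G.edgeSet, w2 (d e)) * F (fun e => (d e).1 || (d e).2))
  rw [← hfib]
  refine Finset.sum_congr rfl fun c _ => ?_
  have hconst : ∀ d ∈ Finset.univ.filter
      (fun d : G.edgeSet → Bool × Bool => (fun e => (d e).1 || (d e).2) = c),
      (∏ e : G.edgeSet, w2 (d e)) * F (fun e => (d e).1 || (d e).2)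
        = (∏ e : G.edgeSet, w2 (d e)) * F c := by
    intro d hd
    rw [Finset.mem_filter] at hd
    rw [hd.2]
  rw [Finset.sum_congr rfl hconst, ← Finset.sum_mul]
  have hset : Finset.univ.filter
      (fun d : G.edgeSet → Bool × Bool => (fun e => (d e).1 || (d e).2) = c)
      = Fintype.piFinset (fun e => Finset.univ.filter (fun y : Bool × Bool => (y.1 || y.2) = c e)) := by
    ext d
    simp only [Finset.mem_filter, Finset.mem_univ, true_and, Fintype.mem_piFinset]
    constructor
    · intro h e; exact congrFun h e
    · intro h; funext e; exact h e
  rw [hset]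
  have hpi := Finset.prod_univ_sum
    (fun e : G.edgeSet => Finset.univ.filter (fun y : Bool × Bool => (y.1 || y.2) = c e))
    (fun _ y => w2 y)
  rw [← hpi]
  have hedge : ∀ x : Bool, ∑ y ∈ Finset.univ.filter (fun y : Bool × Bool => (y.1 || y.2) = x), w2 y
      = (if x then p + r - p*r else 1 - (p + r - p*r)) := by
    intro x
    rw [Finset.sum_filter]
    rw [Fintype.sum_prod_type]
    cases x <;> simp [hw2] <;> ring
  have hfin : ∏ e : G.edgeSet,
      (∑ y ∈ Finset.univ.filter (fun y : Bool × Bool => (y.1 || y.2) = c e), w2 y)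
      = pw G (p + r - p*r) c := by
    rw [pw]
    exact Finset.prod_congr rfl fun e _ => hedge (c e)
  rw [hfin]

lemma sprinkle_union_le {p r : ℝ} (hp0 : 0 ≤ p) (hp1 : p ≤ 1) (hr0 : 0 ≤ r) (hr1 : r ≤ 1)
    {D : Set (G.edgeSet → Bool)} (hD : Decr G D) :
    percProb G (p + r - p*r) D ≤ percProb G p D * percProb G r D := by
  rw [percProb_as_ind, percProb_as_ind, percProb_as_ind]
  rw [key_identity]
  rw [Finset.sum_mul_sum]
  refine Finset.sum_le_sum fun a _ => Finset.sum_le_sum fun b _ => ?_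
  have hnn : 0 ≤ pw G p a * pw G r b :=
    mul_nonneg (pw_nonneg G hp0 hp1 a) (pw_nonneg G hr0 hr1 b)
  have hind : ind G D (fun e => a e || b e) ≤ ind G D a * ind G D b := by
    simp only [ind]
    by_cases hub : (fun e => a e || b e) ∈ D
    · have ha : a ∈ D := hD a (fun e => a e || b e) (fun e he => by simp [he]) hub
      have hb : b ∈ D := hD b (fun e => a e || b e) (fun e he => by simp [he]) hub
      rw [if_pos hub, if_pos ha, if_pos hb, mul_one]
    · rw [if_neg hub]
      by_cases ha : a ∈ D <;> by_cases hb : b ∈ D <;> simp [ha, hb]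
  calc pw G p a * pw G r b * ind G D (fun e => a e || b e)
      ≤ pw G p a * pw G r b * (ind G D a * ind G D b) :=
        mul_le_mul_of_nonneg_left hind hnn
    _ = pw G p a * ind G D a * (pw G r b * ind G D b) := by ring

/-! ### Independence -/

/-- merge two configurations along a set of edges -/
noncomputable def mrg (S : Set G.edgeSet) (a b : G.edgeSet → Bool) : G.edgeSet → Bool :=
  fun e => if e ∈ S then a e else b e

lemma percProb_indep (p : ℝ) (S : Set G.edgeSet) (U Z : Set (G.edgeSet → Bool))
    (hU : ∀ a b : G.edgeSet → Bool, (∀ e ∈ S, a e = b e) → (a ∈ U ↔ b ∈ U))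
    (hZ : ∀ a b : G.edgeSet → Bool, (∀ e ∉ S, a e = b e) → (a ∈ Z ↔ b ∈ Z)) :
    percProb G p (U ∩ Z) = percProb G p U * percProb G p Z := by
  classical
  have hinv : Function.Involutive (fun ab : (G.edgeSet → Bool) × (G.edgeSet → Bool) =>
      (mrg G S ab.1 ab.2, mrg G S ab.2 ab.1)) := by
    rintro ⟨a, b⟩
    simp only [Prod.mk.injEq]
    constructor <;> funext e <;> simp only [mrg] <;> by_cases he : e ∈ S <;> simp [he]
  set σ : ((G.edgeSet → Bool) × (G.edgeSet → Bool)) ≃ ((G.edgeSet → Bool) × (G.edgeSet → Bool)) :=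
    hinv.toPerm _ with hσ
  rw [percProb_as_ind, percProb_as_ind, percProb_as_ind]
  rw [Finset.sum_mul_sum]
  rw [← Fintype.sum_prod_type (f := fun ab : (G.edgeSet → Bool) × (G.edgeSet → Bool) =>
      pw G p ab.1 * ind G U ab.1 * (pw G p ab.2 * ind G Z ab.2))]
  rw [← Equiv.sum_comp σ (fun ab : (G.edgeSet → Bool) × (G.edgeSet → Bool) =>
      pw G p ab.1 * ind G U ab.1 * (pw G p ab.2 * ind G Z ab.2))]
  have hterm : ∀ ab : (G.edgeSet → Bool) × (G.edgeSet → Bool),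
      pw G p (σ ab).1 * ind G U (σ ab).1 * (pw G p (σ ab).2 * ind G Z (σ ab).2)
        = (pw G p ab.1 * ind G (U ∩ Z) ab.1) * pw G p ab.2 := by
    rintro ⟨a, b⟩
    have hσab : σ (a, b) = (mrg G S a b, mrg G S b a) := rfl
    rw [hσab]
    have hw : pw G p (mrg G S a b) * pw G p (mrg G S b a) = pw G p a * pw G p b := by
      simp only [pw, ← Finset.prod_mul_distrib]
      refine Finset.prod_congr rfl fun e _ => ?_
      by_cases he : e ∈ S <;> simp only [mrg, if_pos, if_neg, he, if_true, if_false] <;> ring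
    have hU' : ind G U (mrg G S a b) = ind G U a := by
      simp only [ind]
      have hiff := hU (mrg G S a b) a (fun e he => by simp [mrg, he])
      by_cases ha : a ∈ U
      · rw [if_pos ha, if_pos (hiff.mpr ha)]
      · rw [if_neg ha, if_neg (fun hm => ha (hiff.mp hm))]
    have hZ' : ind G Z (mrg G S b a) = ind G Z a := by
      simp only [ind]
      have hiff := hZ (mrg G S b a) a (fun e he => by simp [mrg, he])
      by_cases ha : a ∈ Z
      · rw [if_pos ha, if_pos (hiff.mpr ha)]
      · rw [if_neg ha, if_neg (fun hm => ha (hiff.mp hm))]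
    have hUZ : ind G U a * ind G Z a = ind G (U ∩ Z) a := by
      simp only [ind]
      by_cases ha : a ∈ U <;> by_cases hb : a ∈ Z <;>
        simp [ha, hb, Set.mem_inter_iff]
    calc pw G p (mrg G S a b) * ind G U (mrg G S a b)
          * (pw G p (mrg G S b a) * ind G Z (mrg G S b a))
        = (pw G p (mrg G S a b) * pw G p (mrg G S b a)) * (ind G U a * ind G Z a) := by
          rw [hU', hZ']; ring
      _ = (pw G p a * ind G (U ∩ Z) a) * pw G p b := by rw [hw, hUZ]; ring
  rw [Fintype.sum_congr _ _ hterm]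
  rw [Fintype.sum_prod_type]
  have hlast : ∀ a : G.edgeSet → Bool,
      ∑ b : G.edgeSet → Bool, (pw G p a * ind G (U ∩ Z) a) * pw G p b
        = pw G p a * ind G (U ∩ Z) a := by
    intro a
    rw [← Finset.mul_sum, sum_pw, mul_one]
  rw [Fintype.sum_congr _ _ hlast]

/-! ### Graph lemmas -/

/-- the cluster (reachable set) of `x` -/
def Rset (x : V) (c : G.edgeSet → Bool) : Set V :=
  {v | (openSubgraph G c).Reachable x v}

/-- an edge touches a vertex set -/
def touch (C : Set V) (e : G.edgeSet) : Prop := ∃ v ∈ C, v ∈ (e : Sym2 V)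

/-- configuration with all edges touching `C` closed -/
noncomputable def maskC (C : Set V) (c : G.edgeSet → Bool) : G.edgeSet → Bool :=
  fun e => if touch G C e then false else c e

lemma openSubgraph_mono {c c' : G.edgeSet → Bool} (h : ∀ e, c e = true → c' e = true) :
    openSubgraph G c ≤ openSubgraph G c' := by
  intro u v hadj
  obtain ⟨hG, hce⟩ := hadj
  exact ⟨hG, h _ hce⟩

lemma support_reachable {c : G.edgeSet → Bool} {u v : V}
    (W : (openSubgraph G c).Walk u v) {w : V} (hw : w ∈ W.support) :
    (openSubgraph G c).Reachable u w :=
  ⟨W.takeUntil w hw⟩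

lemma walk_transfer {c c' : G.edgeSet → Bool} {C : Set V}
    (h : ∀ e, touch G C e → c e = c' e) {u v : V}
    (W : (openSubgraph G c).Walk u v) (hsupp : ∀ w ∈ W.support, w ∈ C) :
    (openSubgraph G c').Reachable u v := by
  induction W with
  | nil => exact Reachable.refl _
  | @cons u u₁ v hadj W' ih =>
    obtain ⟨hG, hce⟩ := hadj
    have hu : u ∈ C := hsupp u (SimpleGraph.Walk.start_mem_support _)
    have htouch : touch G C ⟨s(u, u₁), (G.mem_edgeSet).mpr hG⟩ :=
      ⟨u, hu, by simp⟩
    have hadj' : (openSubgraph G c').Adj u u₁ := ⟨hG, by rw [← h _ htouch]; exact hce⟩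
    refine hadj'.reachable.trans (ih ?_)
    intro w hw
    exact hsupp w (List.mem_cons_of_mem _ hw)

lemma walk_stay {c c' : G.edgeSet → Bool} {C : Set V} {x : V}
    (h : ∀ e, touch G C e → c e = c' e) (hc : Rset G x c = C) {u v : V}
    (W : (openSubgraph G c').Walk u v) (hu : u ∈ C) : v ∈ C := by
  induction W with
  | nil => exact hu
  | @cons u u₁ v hadj W' ih =>
    obtain ⟨hG, hce⟩ := hadj
    have htouch : touch G C ⟨s(u, u₁), (G.mem_edgeSet).mpr hG⟩ := ⟨u, hu, by simp⟩
    have hadj0 : (openSubgraph G c).Adj u u₁ := ⟨hG, by rw [h _ htouch]; exact hce⟩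
    have hu0 : (openSubgraph G c).Reachable x u := by rw [← hc] at hu; exact hu
    have hu1 : u₁ ∈ C := by
      rw [← hc]
      exact hu0.trans hadj0.reachable
    exact ih hu1

/-- measurability of the cluster event wrt touching edges -/
lemma Rset_transfer {c c' : G.edgeSet → Bool} {C : Set V} {x : V}
    (h : ∀ e, touch G C e → c e = c' e) (hc : Rset G x c = C) : Rset G x c' = C := by
  apply Set.eq_of_subset_of_subset
  · intro v hv
    obtain ⟨W⟩ := hv
    have hx : x ∈ C := by rw [← hc]; exact Reachable.refl _
    exact walk_stay G h hc W hx
  · intro v hv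
    rw [← hc] at hv
    obtain ⟨W⟩ := hv
    have hsupp : ∀ w ∈ W.support, w ∈ C := by
      intro w hw
      rw [← hc]
      exact support_reachable G W hw
    exact walk_transfer G h W hsupp

lemma mask_le (C : Set V) (c : G.edgeSet → Bool) :
    ∀ e, maskC G C c e = true → c e = true := by
  intro e he
  by_cases ht : touch G C e
  · rw [maskC, if_pos ht] at he; exact absurd he (by simp)
  · rwa [maskC, if_neg ht] at he

lemma mask_eq_of_agree {c c' : G.edgeSet → Bool} (C : Set V)
    (h : ∀ e, ¬ touch G C e → c e = c' e) : maskC G C c = maskC G C c' := by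
  funext e
  by_cases ht : touch G C e
  · rw [maskC, maskC, if_pos ht, if_pos ht]
  · rw [maskC, maskC, if_neg ht, if_neg ht]; exact h e ht

lemma avoid_walk_mask {c : G.edgeSet → Bool} {C : Set V} {u v : V}
    (W : (openSubgraph G c).Walk u v) (hav : ∀ w ∈ W.support, w ∉ C) :
    (openSubgraph G (maskC G C c)).Reachable u v := by
  induction W with
  | nil => exact Reachable.refl _
  | @cons u u₁ v hadj W' ih =>
    obtain ⟨hG, hce⟩ := hadj
    have hu : u ∉ C := hav u (SimpleGraph.Walk.start_mem_support _)
    have hu₁ : u₁ ∉ C := hav u₁ (by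
      exact List.mem_cons_of_mem _ (SimpleGraph.Walk.start_mem_support _))
    have hnt : ¬ touch G C (⟨s(u, u₁), (G.mem_edgeSet).mpr hG⟩ : G.edgeSet) := by
      rintro ⟨w, hwC, hwmem⟩
      simp only [Sym2.mem_iff] at hwmem
      rcases hwmem with rfl | rfl
      · exact hu hwC
      · exact hu₁ hwC
    have hadj' : (openSubgraph G (maskC G C c)).Adj u u₁ :=
      ⟨hG, by rw [maskC, if_neg hnt]; exact hce⟩
    refine hadj'.reachable.trans (ih ?_)
    intro w hw
    exact hav w (List.mem_cons_of_mem _ hw)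

lemma reach_mask_of_cluster {c : G.edgeSet → Bool} {C : Set V} {x y v : V}
    (hc : Rset G x c = C) (hy : y ∉ C)
    (hr : (openSubgraph G c).Reachable y v) :
    (openSubgraph G (maskC G C c)).Reachable y v := by
  obtain ⟨W⟩ := hr
  refine avoid_walk_mask G W ?_
  intro w hw hwC
  have h1 : (openSubgraph G c).Reachable y w := support_reachable G W hw
  have h2 : (openSubgraph G c).Reachable x w := by rw [← hc] at hwC; exact hwC
  have h3 : (openSubgraph G c).Reachable x y := h2.trans h1.symm
  rw [← hc] at hy
  exact hy h3

lemma reach_of_mask {c : G.edgeSet → Bool} {C : Set V} {y v : V}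
    (hr : (openSubgraph G (maskC G C c)).Reachable y v) :
    (openSubgraph G c).Reachable y v :=
  hr.mono (openSubgraph_mono G (mask_le G C c))

/-! ### Events and the correlation inequality -/

variable (B : Finset V)

/-- event: x is connected to B -/
def EvXB (x : V) : Set (G.edgeSet → Bool) :=
  {c | ∃ b ∈ B, (openSubgraph G c).Reachable x b}

/-- event: x is connected to y -/
def EvP (x y : V) : Set (G.edgeSet → Bool) :=
  {c | (openSubgraph G c).Reachable x y}

/-- event: no vertex of Y is connected to B -/
def DEv (Y : Finset V) : Set (G.edgeSet → Bool) :=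
  {c | ∀ y ∈ Y, ¬ ∃ b ∈ B, (openSubgraph G c).Reachable y b}

/-- event: x is connected to B but to no vertex of Y -/
def WEv (x : V) (Y : Finset V) : Set (G.edgeSet → Bool) :=
  {c | (∃ b ∈ B, (openSubgraph G c).Reachable x b)
    ∧ ∀ y ∈ Y, ¬ (openSubgraph G c).Reachable x y}

/-- event: the cluster of x is exactly C -/
def UC (x : V) (C : Finset V) : Set (G.edgeSet → Bool) :=
  {c | Rset G x c = ↑C}

/-- event: no vertex of Y is connected to B avoiding C -/
def ZC (Y : Finset V) (C : Finset V) : Set (G.edgeSet → Bool) :=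
  {c | ∀ y ∈ Y, ∀ b ∈ B, ¬ (openSubgraph G (maskC G (↑C) c)).Reachable y b}

/-- the family of admissible clusters -/
def SS (Y : Finset V) : Finset (Finset V) :=
  Finset.univ.filter (fun C => (∃ b ∈ B, b ∈ C) ∧ ∀ y ∈ Y, y ∉ C)

lemma decomp (p : ℝ) (x : V) (Y : Finset V) (T : Set (G.edgeSet → Bool)) :
    percProb G p (WEv G B x Y ∩ T) = ∑ C ∈ SS B Y, percProb G p (UC G x C ∩ T) := by
  simp only [percProb_def]
  rw [Finset.sum_comm]
  refine Finset.sum_congr rfl fun c _ => ?_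
  by_cases hT : c ∈ T
  · by_cases hW : c ∈ WEv G B x Y
    · set C₀ : Finset V := Finset.univ.filter (· ∈ Rset G x c) with hC₀def
      have hC₀ : ↑C₀ = Rset G x c := by
        ext v; simp [hC₀def]
      have hC₀SS : C₀ ∈ SS B Y := by
        rw [SS, Finset.mem_filter]
        refine ⟨Finset.mem_univ _, ?_, ?_⟩
        · obtain ⟨b, hb, hrb⟩ := hW.1
          exact ⟨b, hb, by rw [← Finset.mem_coe, hC₀]; exact hrb⟩
        · intro y hy
          rw [← Finset.mem_coe, hC₀]
          exact hW.2 y hy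
      rw [if_pos (Set.mem_inter hW hT)]
      rw [Finset.sum_eq_single_of_mem C₀ hC₀SS]
      · rw [if_pos (Set.mem_inter (by rw [UC]; exact Set.mem_setOf.mpr hC₀.symm) hT)]
      · intro C hC hne
        rw [if_neg]
        rintro ⟨hU, -⟩
        apply hne
        apply Finset.coe_injective
        rw [hC₀]
        exact (Set.mem_setOf.mp hU).symm ▸ rfl
    · rw [if_neg (fun h : c ∈ WEv G B x Y ∩ T => hW h.1)]
      symm
      refine Finset.sum_eq_zero fun C hC => ?_
      rw [if_neg]
      rintro ⟨hU, -⟩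
      apply hW
      have hRC : Rset G x c = ↑C := Set.mem_setOf.mp hU
      rw [SS, Finset.mem_filter] at hC
      obtain ⟨-, ⟨b, hb, hbC⟩, hYC⟩ := hC
      constructor
      · exact ⟨b, hb, by rw [show (openSubgraph G c).Reachable x b ↔ b ∈ Rset G x c from Iff.rfl, hRC]; exact hbC⟩
      · intro y hy hry
        exact hYC y hy (by rw [← Finset.mem_coe, ← hRC]; exact hry)
  · rw [if_neg (fun h : c ∈ WEv G B x Y ∩ T => hT h.2)]
    symm
    exact Finset.sum_eq_zero fun C _ => if_neg (fun h : c ∈ UC G x C ∩ T => hT h.2)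

lemma DEv_subset_ZC (Y : Finset V) (C : Finset V) : DEv G B Y ⊆ ZC G B Y C := by
  intro c hc y hy b hb hr
  exact hc y hy ⟨b, hb, reach_of_mask G hr⟩

lemma UC_inter_ZC_subset (Y : Finset V) {C : Finset V} (hC : C ∈ SS B Y) :
    UC G x C ∩ ZC G B Y C ⊆ WEv G B x Y ∩ DEv G B Y ∨ True := Or.inr trivial

lemma UC_ZC_subset_UC_DEv (Y : Finset V) {C : Finset V} (hC : C ∈ SS B Y) (x : V) :
    UC G x C ∩ ZC G B Y C ⊆ UC G x C ∩ DEv G B Y := by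
  rintro c ⟨hU, hZ⟩
  refine ⟨hU, fun y hy => ?_⟩
  rintro ⟨b, hb, hr⟩
  rw [SS, Finset.mem_filter] at hC
  have hyC : y ∉ (↑C : Set V) := fun hmem => hC.2.2 y hy hmem
  have hRC : Rset G x c = ↑C := Set.mem_setOf.mp hU
  exact hZ y hy b hb (reach_mask_of_cluster G hRC hyC hr)

lemma UC_indep_ZC (p : ℝ) (x : V) (Y : Finset V) (C : Finset V) :
    percProb G p (UC G x C ∩ ZC G B Y C)
      = percProb G p (UC G x C) * percProb G p (ZC G B Y C) := by
  apply percProb_indep G p {e | touch G (↑C) e}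
  · intro a b hab
    constructor
    · intro ha
      exact Set.mem_setOf.mpr (Rset_transfer G (fun e he => hab e he) (Set.mem_setOf.mp ha))
    · intro hb
      exact Set.mem_setOf.mpr (Rset_transfer G (fun e he => (hab e he).symm) (Set.mem_setOf.mp hb))
  · intro a b hab
    have hmask : maskC G (↑C) a = maskC G (↑C) b :=
      mask_eq_of_agree G _ (fun e he => hab e he)
    constructor
    · intro ha y hy b' hb' hr
      exact (Set.mem_setOf.mp ha) y hy b' hb' (by rw [hmask]; exact hr)
    · intro hbm y hy b' hb' hr
      exact (Set.mem_setOf.mp hbm) y hy b' hb' (by rw [← hmask]; exact hr)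

/-- the correlation inequality: the event that x connects to B avoiding Y is
positively correlated with Y being disconnected from B -/
lemma corr_ineq {p : ℝ} (hp0 : 0 ≤ p) (hp1 : p ≤ 1) (x : V) (Y : Finset V) :
    percProb G p (WEv G B x Y) * percProb G p (DEv G B Y)
      ≤ percProb G p (WEv G B x Y ∩ DEv G B Y) := by
  have h1 : percProb G p (WEv G B x Y) = ∑ C ∈ SS B Y, percProb G p (UC G x C) := by
    have := decomp G B p x Y Set.univ
    simpa [Set.inter_univ] using this
  rw [h1, Finset.sum_mul]
  rw [decomp G B p x Y (DEv G B Y)]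
  refine Finset.sum_le_sum fun C hC => ?_
  calc percProb G p (UC G x C) * percProb G p (DEv G B Y)
      ≤ percProb G p (UC G x C) * percProb G p (ZC G B Y C) := by
        apply mul_le_mul_of_nonneg_left
        · exact percProb_mono G hp0 hp1 (DEv_subset_ZC G B Y C)
        · exact percProb_nonneg G hp0 hp1 _
    _ = percProb G p (UC G x C ∩ ZC G B Y C) := (UC_indep_ZC G B p x Y C).symm
    _ ≤ percProb G p (UC G x C ∩ DEv G B Y) :=
        percProb_mono G hp0 hp1 (UC_ZC_subset_UC_DEv G B Y hC x)

/-- per-vertex induction step -/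
lemma step_ineq {p θ : ℝ} (hp0 : 0 ≤ p) (hp1 : p ≤ 1) {x : V} {Y : Finset V}
    (hx : x ∉ Y) (hθ : θ ≤ percProb G p (EvXB G B x)) :
    percProb G p (DEv G B (insert x Y))
      ≤ Real.exp (-θ + ∑ y ∈ Y, percProb G p (EvP G x y)) * percProb G p (DEv G B Y) := by
  have hDnn : 0 ≤ percProb G p (DEv G B Y) := percProb_nonneg G hp0 hp1 _
  -- W lower bound via union bound
  have hWlb : percProb G p (EvXB G B x) - ∑ y ∈ Y, percProb G p (EvP G x y)
      ≤ percProb G p (WEv G B x Y) := by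
    have hub := percProb_union_bound G hp0 hp1 (E := EvXB G B x) (U := WEv G B x Y) Y
      (fun y => EvP G x y) ?_
    · linarith
    · intro c hc hWc
      by_contra hno
      push_neg at hno
      apply hWc
      refine ⟨hc, fun y hy hr => hno y hy hr⟩
  -- the event DEv (insert x Y)
  have hins : DEv G B (insert x Y) = DEv G B Y \ EvXB G B x := by
    ext c
    simp only [DEv, EvXB, Set.mem_setOf_eq, Set.mem_diff, Finset.mem_insert]
    constructor
    · intro h
      exact ⟨fun y hy => h y (Or.inr hy), h x (Or.inl rfl)⟩
    · rintro ⟨h1, h2⟩ y hy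
      rcases hy with rfl | hy
      · exact h2
      · exact h1 y hy
  have hsplit := percProb_split G p (DEv G B Y) (EvXB G B x)
  have hint : percProb G p (DEv G B Y ∩ EvXB G B x)
      ≥ (θ - ∑ y ∈ Y, percProb G p (EvP G x y)) * percProb G p (DEv G B Y) := by
    have hWD : percProb G p (WEv G B x Y ∩ DEv G B Y)
        ≤ percProb G p (DEv G B Y ∩ EvXB G B x) := by
      apply percProb_mono G hp0 hp1
      rintro c ⟨hW, hD⟩
      exact ⟨hD, hW.1⟩
    have hcorr := corr_ineq G B hp0 hp1 x Y
    have hWlb2 : θ - ∑ y ∈ Y, percProb G p (EvP G x y) ≤ percProb G p (WEv G B x Y) := by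
      linarith
    nlinarith [hDnn, mul_le_mul_of_nonneg_right hWlb2 hDnn]
  have hfinal : percProb G p (DEv G B (insert x Y))
      ≤ (1 - θ + ∑ y ∈ Y, percProb G p (EvP G x y)) * percProb G p (DEv G B Y) := by
    rw [hins]
    nlinarith [hsplit, hint]
  refine hfinal.trans ?_
  apply mul_le_mul_of_nonneg_right _ hDnn
  have := Real.add_one_le_exp (-θ + ∑ y ∈ Y, percProb G p (EvP G x y))
  linarith

/-- the main inductive bound -/
lemma main_bound {p θ μ : ℝ} (hp0 : 0 ≤ p) (hp1 : p ≤ 1) (hμ0 : 0 ≤ μ)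
    (A : Finset V)
    (hmin : ∀ x ∈ A, θ ≤ percProb G p (EvXB G B x))
    (hpair : ∀ x ∈ A, ∀ y ∈ A, x ≠ y → percProb G p (EvP G x y) ≤ μ) :
    ∀ A' : Finset V, A' ⊆ A →
      percProb G p (DEv G B A')
        ≤ Real.exp (-θ * A'.card + μ * (A'.card * (A'.card - 1)) / 2) := by
  intro A'
  induction A' using Finset.induction_on with
  | empty =>
    intro _
    simpa using percProb_le_one G hp0 hp1 (DEv G B ∅)
  | @insert a s ha ih =>
    intro hsub
    have haA : a ∈ A := hsub (Finset.mem_insert_self a s)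
    have hsA : s ⊆ A := fun y hy => hsub (Finset.mem_insert_of_mem hy)
    have hstep := step_ineq G B hp0 hp1 ha (hmin a haA)
    have hsum : ∑ y ∈ s, percProb G p (EvP G a y) ≤ μ * s.card := by
      calc ∑ y ∈ s, percProb G p (EvP G a y) ≤ ∑ _y ∈ s, μ := by
            refine Finset.sum_le_sum fun y hy => ?_
            exact hpair a haA y (hsA hy) (fun h => ha (h ▸ hy))
        _ = μ * s.card := by rw [Finset.sum_const, nsmul_eq_mul]; ring
    have hexp : Real.exp (-θ + ∑ y ∈ s, percProb G p (EvP G a y))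
        ≤ Real.exp (-θ + μ * s.card) := Real.exp_le_exp.mpr (by linarith)
    have hDnn : 0 ≤ percProb G p (DEv G B s) := percProb_nonneg G hp0 hp1 _
    have hexpnn : (0:ℝ) ≤ Real.exp (-θ + μ * s.card) := le_of_lt (Real.exp_pos _)
    calc percProb G p (DEv G B (insert a s))
        ≤ Real.exp (-θ + ∑ y ∈ s, percProb G p (EvP G a y)) * percProb G p (DEv G B s) :=
          hstep
      _ ≤ Real.exp (-θ + μ * s.card) * percProb G p (DEv G B s) := by
          apply mul_le_mul_of_nonneg_right hexp hDnn
      _ ≤ Real.exp (-θ + μ * s.card)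
            * Real.exp (-θ * s.card + μ * (s.card * (s.card - 1)) / 2) := by
          apply mul_le_mul_of_nonneg_left (ih hsA) hexpnn
      _ = Real.exp ((-θ + μ * s.card) + (-θ * s.card + μ * (s.card * (s.card - 1)) / 2)) := by
          rw [← Real.exp_add]
      _ ≤ Real.exp (-θ * (insert a s).card
            + μ * ((insert a s).card * ((insert a s).card - 1)) / 2) := by
          apply Real.exp_le_exp.mpr
          rw [Finset.card_insert_of_notMem ha]
          push_cast
          ring_nf
          nlinarith [hμ0]

/-! ### Iterated sprinkling -/

lemma sprinkle_pow {p : ℝ} (hp0 : 0 ≤ p) (hp1 : p ≤ 1)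
    {D : Set (G.edgeSet → Bool)} (hD : Decr G D) :
    ∀ (n : ℕ) {s : ℝ}, 0 ≤ s → s ≤ 1 →
      percProb G (1 - (1-p)^n * (1-s)) D ≤ (percProb G p D)^n * percProb G s D := by
  intro n
  induction n with
  | zero =>
    intro s hs0 hs1
    rw [pow_zero, pow_zero, one_mul, one_mul, sub_sub_cancel]
  | succ n ih =>
    intro s hs0 hs1
    set t : ℝ := 1 - (1-p)^n * (1-s) with ht
    have hz0 : (0:ℝ) ≤ (1-p)^n * (1-s) :=
      mul_nonneg (pow_nonneg (by linarith) n) (by linarith)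
    have hz1 : (1-p)^n * (1-s) ≤ 1 := by
      have h1 : (1-p:ℝ)^n ≤ 1 := pow_le_one₀ (by linarith) (by linarith)
      nlinarith
    have ht0 : 0 ≤ t := by rw [ht]; linarith
    have ht1 : t ≤ 1 := by rw [ht]; linarith
    have hparam : 1 - (1-p)^(n+1) * (1-s) = p + t - p * t := by
      rw [ht, pow_succ]; ring
    rw [hparam]
    calc percProb G (p + t - p*t) D ≤ percProb G p D * percProb G t D :=
          sprinkle_union_le G hp0 hp1 ht0 ht1 hD
      _ ≤ percProb G p D * ((percProb G p D)^n * percProb G s D) := by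
          apply mul_le_mul_of_nonneg_left (ih hs0 hs1)
          exact percProb_nonneg G hp0 hp1 D
      _ = (percProb G p D)^(n+1) * percProb G s D := by rw [pow_succ]; ring

/-! ### Arithmetic: `log λ ≤ (3/4)⌊λ⌋` -/

lemma floor_log_bound {lam : ℝ} (h1 : 1 ≤ lam) :
    Real.log lam ≤ (3/4 : ℝ) * (⌊lam⌋₊ : ℝ) := by
  have hlam0 : (0:ℝ) < lam := by linarith
  set n : ℕ := ⌊lam⌋₊ with hn
  have hn1 : 1 ≤ n := Nat.le_floor (by exact_mod_cast h1)
  have hlt : lam < (n:ℝ) + 1 := Nat.lt_floor_add_one lam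
  by_cases hone : n = 1
  · rw [hone]
    have hlam2 : lam ≤ 2 := by rw [hone] at hlt; push_cast at hlt; linarith
    have hlog2 : Real.log lam ≤ Real.log 2 :=
      Real.log_le_log hlam0 hlam2
    have := Real.log_two_lt_d9
    push_cast
    linarith
  · have hn2 : 2 ≤ n := by omega
    have hn2' : (2:ℝ) ≤ (n:ℝ) := by exact_mod_cast hn2
    set u : ℝ := Real.sqrt ((n:ℝ)+1) with hu
    have hu0 : 0 ≤ u := Real.sqrt_nonneg _
    have hu2 : u^2 = (n:ℝ)+1 := Real.sq_sqrt (by linarith)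
    have hsl : Real.sqrt lam ≤ u := Real.sqrt_le_sqrt (by linarith)
    have hslog : Real.log lam = 2 * Real.log (Real.sqrt lam) := by
      rw [Real.log_sqrt (le_of_lt hlam0)]; ring
    have hsub : Real.log (Real.sqrt lam) ≤ Real.sqrt lam - 1 :=
      Real.log_le_sub_one_of_pos (Real.sqrt_pos.mpr hlam0)
    have hkey : 2 * u ≤ (3/4) * (n:ℝ) + 2 := by
      nlinarith [sq_nonneg (u - ((3/8)*(n:ℝ) + 1))]
    have hs0 : 0 ≤ Real.sqrt lam := Real.sqrt_nonneg _
    calc Real.log lam = 2 * Real.log (Real.sqrt lam) := hslog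
      _ ≤ 2 * (Real.sqrt lam - 1) := by linarith
      _ ≤ 2 * (u - 1) := by linarith
      _ ≤ (3/4) * (n:ℝ) := by linarith

end Sprinkle

set_option maxHeartbeats 2000000 in
/-- Sprinkling via the Hamming-distance differential inequality: if every `x ∈ A` is
connected to `B` with probability at least `θ` at parameter `p`, and
`θ ≥ 2|A|·max_{x≠y∈A} P_p(x ↔ y)`, then
`P_q(A ↔ B) ≥ 1 − exp(−δ(p,q)·θ·|A|)` where `δ(p,q) = log(log(1−q)/log(1−p))`. -/
theorem sprinkled_connection (V : Type) [Fintype V] [DecidableEq V]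
    (G : SimpleGraph V) [DecidableRel G.Adj] (hconn : G.Connected)
    (p q : ℝ) (hp : 0 < p) (hpq : p < q) (hq : q < 1)
    (A B : Finset V) (θ : ℝ) (hθ0 : 0 < θ) (hθ1 : θ < 1)
    (hmin : ∀ x ∈ A, θ ≤ percProb G p
      {c | ∃ b ∈ B, (openSubgraph G c).Reachable x b})
    (hmax : ∀ x ∈ A, ∀ y ∈ A, x ≠ y →
      2 * (A.card : ℝ) * percProb G p {c | (openSubgraph G c).Reachable x y} ≤ θ) :
    1 - Real.exp (-(Real.log (Real.log (1 - q) / Real.log (1 - p))) * θ * A.card)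
      ≤ percProb G q {c | ∃ a ∈ A, ∃ b ∈ B, (openSubgraph G c).Reachable a b} := by
  classical
  set k : ℝ := (A.card : ℝ) with hk
  have hk0 : 0 ≤ k := Nat.cast_nonneg _
  set D : Set (G.edgeSet → Bool) := Sprinkle.DEv G B A with hD
  set Eε : Set (G.edgeSet → Bool) :=
    {c | ∃ a ∈ A, ∃ b ∈ B, (openSubgraph G c).Reachable a b} with hE
  have hp1 : p ≤ 1 := le_of_lt (lt_trans hpq hq)
  have hq0 : 0 ≤ q := le_of_lt (lt_trans hp hpq)
  have hq1 : q ≤ 1 := le_of_lt hq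
  have h1p : 0 < 1 - p := by linarith
  have h1q : 0 < 1 - q := by linarith
  set lam : ℝ := Real.log (1 - q) / Real.log (1 - p) with hlam
  have hlogp_neg : Real.log (1 - p) < 0 := Real.log_neg h1p (by linarith)
  have hlogq_neg : Real.log (1 - q) < 0 := Real.log_neg h1q (by linarith)
  have hlogq_lt : Real.log (1 - q) < Real.log (1 - p) := Real.log_lt_log h1q (by linarith)
  have hlam1 : 1 < lam := by
    have hrw : lam = (-Real.log (1-q)) / (-Real.log (1-p)) := by
      rw [hlam, neg_div_neg_eq]
    rw [hrw, lt_div_iff₀ (by linarith : (0:ℝ) < -Real.log (1-p))]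
    linarith
  have hlam0 : 0 ≤ lam := by linarith
  set n : ℕ := ⌊lam⌋₊ with hn
  have hnlam : (n:ℝ) ≤ lam := Nat.floor_le hlam0
  have hrpow : (1-p) ^ (lam : ℝ) = 1 - q := by
    rw [Real.rpow_def_of_pos h1p, hlam]
    have harg : Real.log (1-p) * (Real.log (1-q) / Real.log (1-p)) = Real.log (1-q) := by
      field_simp [ne_of_lt hlogp_neg]
    rw [harg, Real.exp_log h1q]
  have hpowq : 1 - q ≤ (1-p)^n := by
    have h2 : (1-p:ℝ) ^ (lam:ℝ) ≤ (1-p) ^ ((n:ℕ):ℝ) :=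
      Real.rpow_le_rpow_of_exponent_ge h1p (by linarith) hnlam
    rw [hrpow, Real.rpow_natCast] at h2
    exact h2
  have hpn_pos : (0:ℝ) < (1-p)^n := pow_pos h1p n
  set r : ℝ := 1 - (1-q)/(1-p)^n with hr
  have hr0 : 0 ≤ r := by
    rw [hr, sub_nonneg, div_le_one hpn_pos]
    exact hpowq
  have hr1 : r ≤ 1 := by
    have hdiv : 0 ≤ (1-q)/(1-p)^n := div_nonneg (le_of_lt h1q) (le_of_lt hpn_pos)
    rw [hr]; linarith
  have hparam : 1 - (1-p)^n * (1-r) = q := by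
    rw [hr]
    field_simp
    ring
  -- decreasing
  have hDecr : Sprinkle.Decr G D := by
    intro c c' hcc hc'
    intro a ha hex
    obtain ⟨b, hb, hreach⟩ := hex
    exact hc' a ha ⟨b, hb, hreach.mono (Sprinkle.openSubgraph_mono G hcc)⟩
  -- C2 bound
  set μ : ℝ := θ / (2*k) with hμ
  have hμ0 : 0 ≤ μ := by
    rw [hμ]
    rcases eq_or_lt_of_le hk0 with hk' | hk'
    · rw [← hk']; simp
    · positivity
  have hmin' : ∀ x ∈ A, θ ≤ percProb G p (Sprinkle.EvXB G B x) := fun x hx => hmin x hx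
  have hpair' : ∀ x ∈ A, ∀ y ∈ A, x ≠ y → percProb G p (Sprinkle.EvP G x y) ≤ μ := by
    intro x hx y hy hxy
    have hkpos : (0:ℝ) < k := by
      rw [hk]
      have : 0 < A.card := Finset.card_pos.mpr ⟨x, hx⟩
      exact_mod_cast this
    have h2k : (0:ℝ) < 2*k := by linarith
    have := hmax x hx y hy hxy
    rw [hμ, le_div_iff₀ h2k]
    have hEvP : Sprinkle.EvP G x y = {c | (openSubgraph G c).Reachable x y} := rfl
    calc percProb G p (Sprinkle.EvP G x y) * (2*k)
        = 2 * k * percProb G p {c | (openSubgraph G c).Reachable x y} := by rw [hEvP]; ring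
      _ ≤ θ := this
  have hC2 := Sprinkle.main_bound G B (le_of_lt hp) hp1 hμ0 A hmin' hpair' A (subset_refl A)
  have hexp_le : -θ * k + μ * (k * (k - 1)) / 2 ≤ -(3/4) * θ * k := by
    rcases eq_or_lt_of_le hk0 with hk' | hk'
    · rw [← hk']; simp
    · have heq : μ * (k*(k-1))/2 = θ*(k-1)/(4*k) * k := by
        rw [hμ]; field_simp; ring
      have heq2 : θ*(k-1)/(4*k) * k = θ*(k-1)/4 := by
        field_simp
      rw [heq, heq2]
      nlinarith [hθ0.le, hk']
  have hPp : percProb G p D ≤ Real.exp (-(3/4) * θ * k) := by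
    refine hC2.trans ?_
    exact Real.exp_le_exp.mpr hexp_le
  -- iterate
  have hiter := Sprinkle.sprinkle_pow G (le_of_lt hp) hp1 hDecr n hr0 hr1
  rw [hparam] at hiter
  have hPpnn : 0 ≤ percProb G p D := Sprinkle.percProb_nonneg G (le_of_lt hp) hp1 D
  have hq_bound : percProb G q D ≤ Real.exp (-(3/4) * θ * k) ^ n := by
    have h3 : (percProb G p D)^n ≤ Real.exp (-(3/4)*θ*k)^n :=
      pow_le_pow_left₀ hPpnn hPp n
    have h4 : percProb G r D ≤ 1 := Sprinkle.percProb_le_one G hr0 hr1 D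
    have h5 : (percProb G p D)^n * percProb G r D ≤ (percProb G p D)^n :=
      mul_le_of_le_one_right (pow_nonneg hPpnn n) h4
    calc percProb G q D ≤ (percProb G p D)^n * percProb G r D := hiter
      _ ≤ (percProb G p D)^n := h5
      _ ≤ Real.exp (-(3/4)*θ*k)^n := h3
  have hfl := Sprinkle.floor_log_bound (le_of_lt hlam1)
  have hθk0 : 0 ≤ θ * k := mul_nonneg hθ0.le hk0
  have hexp2 : Real.exp (-(3/4) * θ * k) ^ n ≤ Real.exp (-(Real.log lam) * θ * k) := by
    rw [← Real.exp_nat_mul]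
    apply Real.exp_le_exp.mpr
    have hmul : Real.log lam * (θ*k) ≤ ((3/4) * (n:ℝ)) * (θ*k) :=
      mul_le_mul_of_nonneg_right hfl hθk0
    nlinarith [hmul]
  -- complement
  have hsplit := Sprinkle.percProb_split G q Set.univ Eε
  have huniv : percProb G q Set.univ = 1 := Sprinkle.percProb_univ G q
  have h6 : Set.univ ∩ Eε = Eε := Set.univ_inter _
  have h7 : Set.univ \ Eε = D := by
    ext c
    constructor
    · rintro ⟨-, hne⟩
      intro a ha hex
      exact hne ⟨a, ha, hex⟩
    · rintro hDc
      refine ⟨Set.mem_univ c, ?_⟩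
      rintro ⟨a, ha, hex⟩
      exact hDc a ha hex
  rw [huniv, h6, h7] at hsplit
  have hqD : percProb G q D ≤ Real.exp (-(Real.log lam) * θ * k) :=
    hq_bound.trans hexp2
  have : percProb G q Eε = 1 - percProb G q D := by linarith
  rw [this]
  linarith
end

section
/- Let G be an infinite, connected, locally finite vertex-transitive graph and let r ∈ ℕ. Then every path in G that starts at a vertex of the sphere S_r (of radius r around a fixed root o) and ends at a vertex of the sphere S_{2r+1} contains a vertex of the exposed sphere S_r^∞, where S_r^∞ is the set of vertices u ∈ S_r such that there exists an infinite self-avoiding path started at u that never returns to the ball B_r after its first step. -/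
/-!
Vertex-transitivity and compactness give a bi-infinite geodesic through the endpoint `b`
of the path. As `d(o, b) = 2r + 1`, the ball `B_r` meets at most one of its two halves, so
`b` has a geodesic escape ray avoiding `B_r`. Let `z` be the last vertex of the path inside
`B_r`; it lies on `S_r`, and the remainder of the path followed by the escape ray stays
outside `B_r` after its first step. This walk visits every vertex finitely often, so erasing
its loops yields the required self-avoiding ray from `z`.
-/

open SimpleGraph Function Filter

/-- Loop erasure: `t` jumps each time to the last visit of the current point. -/
theorem exists_strictMono_injective_chain_of_finite_fibers {α : Type*} (R : α → α → Prop)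
    {h : ℕ → α} (hR : ∀ i, R (h i) (h (i + 1))) (hfin : ∀ a, {i | h i = a}.Finite) :
    ∃ t : ℕ → ℕ, StrictMono t ∧ h (t 0) = h 0 ∧ Injective (h ∘ t) ∧
      ∀ k, R (h (t k)) (h (t (k + 1))) := by
  let last : α → ℕ := fun a => sSup {i | h i = a}
  have h_last (i : ℕ) : h (last (h i)) = h i :=
    Nat.sSup_mem (s := {j | h j = h i}) ⟨i, rfl⟩ (hfin _).bddAbove
  have le_last {i : ℕ} {a : α} (hi : h i = a) : i ≤ last a := le_csSup (hfin a).bddAbove hi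
  let t : ℕ → ℕ := fun k => Nat.rec (last (h 0)) (fun _ tk => last (h (tk + 1))) k
  have t_last (k : ℕ) : t k = last (h (t k)) := by
    obtain ⟨j, hj⟩ : ∃ j, t k = last (h j) := by cases k <;> exact ⟨_, rfl⟩
    rw [hj, h_last]
  have hmono : StrictMono t :=
    strictMono_nat_of_lt_succ fun k => Nat.lt_of_succ_le (le_last (i := t k + 1) rfl)
  refine ⟨t, hmono, h_last 0, fun j k hjk => hmono.injective ?_, fun k => ?_⟩
  · exact le_antisymm ((le_last hjk).trans_eq (t_last k).symm)
      ((le_last hjk.symm).trans_eq (t_last j).symm)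
  · change R (h (t k)) (h (last (h (t k + 1))))
    rw [h_last]
    exact hR _

namespace SimpleGraph

variable {V : Type*} {G : SimpleGraph V}

theorem Iso.dist_eq {V' : Type*} {G' : SimpleGraph V'} (φ : G ≃g G') (u v : V) :
    G'.dist (φ u) (φ v) = G.dist u v := by
  rw [dist_eq_sInf, dist_eq_sInf]
  congr 1
  ext n
  constructor
  · rintro ⟨p, rfl⟩
    exact ⟨(p.map φ.symm.toHom).copy (by simp) (by simp), by simp⟩
  · rintro ⟨p, rfl⟩
    exact ⟨p.map φ.toHom, by simp⟩

theorem dist_le_dist_add_one_of_adj {u v : V} (o : V) (h : G.Adj u v) :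
    G.dist o v ≤ G.dist o u + 1 := by
  simpa [dist_eq_one_iff_adj.mpr h] using h.reachable.dist_triangle_right o

theorem finite_setOf_dist_le (hconn : G.Connected) (hlf : ∀ v, (G.neighborSet v).Finite)
    (x : V) (n : ℕ) : {y | G.dist x y ≤ n}.Finite := by
  induction n with
  | zero =>
    refine (Set.finite_singleton x).subset fun y hy => ?_
    exact (hconn.dist_eq_zero_iff.mp (Nat.le_zero.mp hy)).symm
  | succ n ih =>
    refine (ih.biUnion fun c _ => (hlf c).insert c).subset fun y hy => ?_
    simp only [Set.mem_ofPred_eq, Set.mem_iUnion, Set.mem_insert_iff, mem_neighborSet] at hy ⊢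
    obtain hy | hy := Nat.le_succ_iff.mp hy
    · exact ⟨y, hy, .inl rfl⟩
    obtain ⟨p, hp⟩ := hconn.exists_walk_length_eq_dist y x
    cases p with
    | nil => simp at hy
    | cons hadj q =>
      refine ⟨_, ?_, .inr hadj.symm⟩
      have := dist_le q
      rw [Walk.length_cons, dist_comm, hy] at hp
      rw [dist_comm]
      omega

theorem exists_lt_dist [Infinite V] (hconn : G.Connected)
    (hlf : ∀ v, (G.neighborSet v).Finite) (x : V) (n : ℕ) : ∃ y, n < G.dist x y := by
  obtain ⟨y, hy⟩ := (finite_setOf_dist_le hconn hlf x n).infinite_compl.nonempty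
  exact ⟨y, not_le.mp hy⟩

namespace Walk

theorem dist_getVert_le_s17 {u v : V} (p : G.Walk u v) {i j : ℕ} (hij : i ≤ j) :
    G.dist (p.getVert i) (p.getVert j) ≤ j - i := by
  obtain ⟨k, rfl⟩ := Nat.exists_eq_add_of_le hij
  calc G.dist (p.getVert i) (p.getVert (i + k))
      = G.dist (p.getVert i) ((p.drop i).getVert k) := by rw [drop_getVert]
    _ ≤ ((p.drop i).take k).length := dist_le _
    _ ≤ i + k - i := by simp [take_length]

theorem dist_getVert_eq_of_length_eq_dist {u v : V} (p : G.Walk u v)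
    (hp : p.length = G.dist u v) {i j : ℕ} (hij : i ≤ j) (hj : j ≤ p.length) :
    G.dist (p.getVert i) (p.getVert j) = j - i := by
  refine le_antisymm (p.dist_getVert_le_s17 hij) ?_
  have hui : G.dist u (p.getVert i) ≤ i := by simpa using p.dist_getVert_le_s17 i.zero_le
  have hjv : G.dist (p.getVert j) v ≤ p.length - j := by simpa using p.dist_getVert_le_s17 hj
  have := (p.take i).reachable.dist_triangle_left v
  have := (p.drop j).reachable.dist_triangle_right (p.getVert i)
  omega

end Walk

def IsGeodesicLine (G : SimpleGraph V) (γ : ℤ → V) : Prop :=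
  ∀ i j, G.dist (γ i) (γ j) = (i - j).natAbs

namespace IsGeodesicLine

variable {γ : ℤ → V}

theorem comp_neg (hγ : G.IsGeodesicLine γ) : G.IsGeodesicLine fun i => γ (-i) :=
  fun i j => by rw [hγ]; omega

theorem reachable (hγ : G.IsGeodesicLine γ) (i j : ℤ) : G.Reachable (γ i) (γ j) := by
  rcases eq_or_ne i j with rfl | hij
  · rfl
  · exact Reachable.of_dist_ne_zero (by rw [hγ]; omega)

theorem injective (hγ : G.IsGeodesicLine γ) : Injective γ := fun i j hij => by
  have := hγ i j
  rw [hij, dist_self] at this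
  omega

theorem adj (hγ : G.IsGeodesicLine γ) (i : ℤ) : G.Adj (γ i) (γ (i + 1)) := by
  rw [← dist_eq_one_iff_adj, hγ]
  omega

/-- The points of the line within distance `r` of `o` are more than `r` away from `γ 0` but at
most `2r` apart, so they all lie on one side of `γ 0`. -/
theorem exists_forall_lt_dist (hγ : G.IsGeodesicLine γ) (o : V) {r : ℕ}
    (hr : 2 * r < G.dist o (γ 0)) :
    ∃ γ', G.IsGeodesicLine γ' ∧ γ' 0 = γ 0 ∧ ∀ i : ℕ, r < G.dist o (γ' i) := by
  have hreach (i : ℤ) : G.Reachable o (γ i) :=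
    (Reachable.of_dist_ne_zero (by omega)).trans (hγ.reachable 0 i)
  have far (i : ℤ) (hi : G.dist o (γ i) ≤ r) : r < i.natAbs := by
    have := (hreach i).dist_triangle_left (γ 0)
    rw [hγ i 0] at this
    omega
  by_contra! hcon
  obtain ⟨i, hi⟩ := hcon γ hγ rfl
  obtain ⟨j, hj⟩ := hcon _ hγ.comp_neg (by simp)
  have := (hreach i).symm.dist_triangle_left (γ (-j))
  rw [hγ, dist_comm] at this
  have := far i hi
  have := far (-j) hj
  omega

end IsGeodesicLine

theorem exists_geodesic_segment [Infinite V] (hconn : G.Connected)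
    (hlf : ∀ v, (G.neighborSet v).Finite) (htrans : ∀ u v : V, ∃ φ : G ≃g G, φ u = v)
    (b : V) (n : ℕ) : ∃ g : ℤ → V, g 0 = b ∧
      ∀ i j, i.natAbs ≤ n → j.natAbs ≤ n → G.dist (g i) (g j) = (i - j).natAbs := by
  obtain ⟨x, hx⟩ := exists_lt_dist hconn hlf b (2 * n)
  obtain ⟨p, hp⟩ := hconn.exists_walk_length_eq_dist b x
  obtain ⟨φ, hφ⟩ := htrans (p.getVert n) b
  refine ⟨fun i => φ (p.getVert (n + i).toNat), by simpa using hφ, fun i j hi hj => ?_⟩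
  wlog hij : i ≤ j generalizing i j
  · rw [dist_comm, this j i hj hi (by omega)]
    omega
  rw [Iso.dist_eq, p.dist_getVert_eq_of_length_eq_dist hp (by omega) (by omega)]
  omega

/-- A geodesic line is a limit of geodesic segments along an ultrafilter; the limit exists
because, by local finiteness, each coordinate takes only finitely many values. -/
theorem exists_isGeodesicLine [Infinite V] (hconn : G.Connected)
    (hlf : ∀ v, (G.neighborSet v).Finite) (htrans : ∀ u v : V, ∃ φ : G ≃g G, φ u = v)
    (b : V) : ∃ γ, G.IsGeodesicLine γ ∧ γ 0 = b := by
  choose g hg0 hg using exists_geodesic_segment hconn hlf htrans b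
  let U := Ultrafilter.of (atTop : Filter ℕ)
  have hlarge (m : ℕ) : ∀ᶠ n in U, m ≤ n := Ultrafilter.of_le _ (eventually_ge_atTop m)
  have hlim (i : ℤ) : ∃ v, ∀ᶠ n in U, g n i = v := by
    have hball : ∀ᶠ n in U, ∃ v ∈ {y | G.dist b y ≤ i.natAbs}, g n i = v :=
      (hlarge i.natAbs).mono fun n hn => ⟨g n i, by simp [← hg0 n, hg n 0 i, hn], rfl⟩
    obtain ⟨v, -, hv⟩ :=
      (Ultrafilter.eventually_exists_mem_iff (finite_setOf_dist_le hconn hlf b _)).mp hball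
    exact ⟨v, hv⟩
  choose γ hγ using hlim
  refine ⟨γ, fun i j => ?_, ?_⟩
  · obtain ⟨n, hni, hnj, hn⟩ := ((hγ i).and ((hγ j).and (hlarge (i.natAbs + j.natAbs)))).exists
    rw [← hni, ← hnj]
    exact hg n i j (by omega) (by omega)
  · obtain ⟨n, hn⟩ := (hγ 0).exists
    rw [← hn, hg0]

/-- The exposed sphere `S_r^∞`. -/
def exposedSphere (G : SimpleGraph V) (o : V) (r : ℕ) : Set V :=
  {z | G.dist o z = r ∧ ∃ f : ℕ → V, f 0 = z ∧ Injective f ∧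
    (∀ i, G.Adj (f i) (f (i + 1))) ∧ ∀ i, 1 ≤ i → r < G.dist o (f i)}

namespace Walk

/-- `ρ 0` is skipped: it is meant to be the endpoint of `w`. -/
def concatRay {a b : V} (w : G.Walk a b) (ρ : ℕ → V) (i : ℕ) : V :=
  if i ≤ w.length then w.getVert i else ρ (i - w.length)

variable {a b : V} (w : G.Walk a b) {ρ : ℕ → V}

theorem concatRay_of_le {i : ℕ} (hi : i ≤ w.length) : w.concatRay ρ i = w.getVert i :=
  if_pos hi

theorem concatRay_of_ge (hρ : ρ 0 = b) {i : ℕ} (hi : w.length ≤ i) :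
    w.concatRay ρ i = ρ (i - w.length) := by
  rcases hi.eq_or_lt with rfl | hi
  · rw [concatRay_of_le w le_rfl, getVert_length, Nat.sub_self, hρ]
  · exact if_neg (by omega)

theorem adj_concatRay (hρ : ρ 0 = b) (hρadj : ∀ i, G.Adj (ρ i) (ρ (i + 1))) (i : ℕ) :
    G.Adj (w.concatRay ρ i) (w.concatRay ρ (i + 1)) := by
  rcases Nat.lt_or_ge i w.length with hi | hi
  · rw [concatRay_of_le w hi.le, concatRay_of_le w hi]
    exact w.adj_getVert_succ hi
  · rw [concatRay_of_ge w hρ hi, concatRay_of_ge w hρ (by omega), Nat.sub_add_comm hi]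
    exact hρadj _

theorem finite_concatRay_fiber (hρ : ρ 0 = b) (hρinj : Injective ρ) (v : V) :
    {i | w.concatRay ρ i = v}.Finite := by
  have hρv : {j | ρ j = v}.Finite :=
    Set.Subsingleton.finite fun j hj k hk => hρinj (hj.trans hk.symm)
  refine ((Set.finite_Iic w.length).union (hρv.image (· + w.length))).subset fun i hi => ?_
  rcases le_or_gt i w.length with hi' | hi'
  · exact .inl hi'
  · rw [Set.mem_ofPred_eq, concatRay_of_ge w hρ hi'.le] at hi
    exact .inr ⟨i - w.length, hi, by simp only; omega⟩

theorem exists_mem_support_mem_exposedSphere {o : V} {r : ℕ} (ha : G.dist o a ≤ r)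
    (hρ : ρ 0 = b) (hρinj : Injective ρ) (hρadj : ∀ i, G.Adj (ρ i) (ρ (i + 1)))
    (hρr : ∀ i, r < G.dist o (ρ i)) : ∃ z ∈ w.support, z ∈ G.exposedSphere o r := by
  obtain ⟨k, hkL, hk_in, hk_last⟩ : ∃ k ≤ w.length, G.dist o (w.concatRay ρ k) ≤ r ∧
      ∀ i, k < i → i ≤ w.length → r < G.dist o (w.concatRay ρ i) :=
    let P i := G.dist o (w.concatRay ρ i) ≤ r
    ⟨Nat.findGreatest P w.length, Nat.findGreatest_le _, Nat.findGreatest_spec (P := P) (m := 0)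
      (Nat.zero_le _) (by simpa [P, concatRay_of_le] using ha),
      fun i hki hi => not_le.mp (Nat.findGreatest_is_greatest (P := P) hki hi)⟩
  have hout (i : ℕ) (hki : k < i) : r < G.dist o (w.concatRay ρ i) := by
    rcases le_or_gt i w.length with hi | hi
    · exact hk_last i hki hi
    · rw [concatRay_of_ge w hρ hi.le]
      exact hρr _
  have hk : G.dist o (w.concatRay ρ k) = r := by
    have := dist_le_dist_add_one_of_adj o (w.adj_concatRay hρ hρadj k)
    have := hout (k + 1) k.lt_succ_self
    omega
  obtain ⟨t, ht, ht0, htinj, htadj⟩ := exists_strictMono_injective_chain_of_finite_fibers G.Adj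
    (fun i => w.adj_concatRay hρ hρadj (k + i))
    (fun v => (w.finite_concatRay_fiber hρ hρinj v).preimage (add_right_injective k).injOn)
  refine ⟨w.concatRay ρ k, ?_, hk, fun i => w.concatRay ρ (k + t i), by simpa using ht0,
    htinj, htadj, fun i hi => hout _ ?_⟩
  · rw [concatRay_of_le w hkL]
    exact w.getVert_mem_support _
  · have : i ≤ t i := ht.id_le i
    omega

end Walk

end SimpleGraph

/-- In an infinite, connected, locally finite, vertex-transitive graph, every path from
the sphere `S_r` to the sphere `S_{2r+1}` contains a vertex of the exposed sphere
`S_r^∞`, i.e. a vertex `z` with `d(o,z) = r` admitting an infinite self-avoiding path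
started at `z` that never returns to the ball `B_r` after its first step. -/
theorem path_meets_exposed_sphere (V : Type) [Infinite V] (G : SimpleGraph V)
    (hconn : G.Connected) (hlf : ∀ v : V, (G.neighborSet v).Finite)
    (htrans : ∀ u v : V, ∃ φ : G ≃g G, φ u = v)
    (o : V) (r : ℕ) (a b : V) (ha : G.dist o a = r) (hb : G.dist o b = 2 * r + 1)
    (w : G.Walk a b) :
    ∃ z ∈ w.support, G.dist o z = r ∧
      ∃ f : ℕ → V, f 0 = z ∧ Function.Injective f ∧
        (∀ i, G.Adj (f i) (f (i + 1))) ∧ ∀ i, 1 ≤ i → r < G.dist o (f i) := by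
  obtain ⟨γ, hγ, hγb⟩ := exists_isGeodesicLine hconn hlf htrans b
  obtain ⟨γ', hγ', hγ'b, hγ'r⟩ := hγ.exists_forall_lt_dist o (r := r) (by rw [hγb, hb]; omega)
  exact w.exists_mem_support_mem_exposedSphere ha.le (ρ := fun i : ℕ => γ' i)
    (by simpa [hγb] using hγ'b) (hγ'.injective.comp Nat.cast_injective)
    (fun i => by simpa using hγ'.adj i) hγ'r
end
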